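/- arXiv:math/0412408 — 4 statements merged into one kernel-verified Lean document; each statement's English description precedes it below -/
import Mathlib

section
/- Let (S, d) be a proper metric space. Then the minimal Martin space ℳᵐ is the disjoint union of 𝒦 and the set of Busemann points of (S, d): ℳᵐ = 𝒦 ∪ {Busemann points}, and no Busemann point belongs to 𝒦. -/
open Filter Topology

noncomputable section

namespace MaxPlus

variable {S : Type*}

/-- Weight of the path `p 0, p 1, ..., p n` for the kernel `A`. -/
def pathWeight (A : S → S → EReal) (p : ℕ → S) (n : ℕ) : EReal :=
  ∑ k ∈ Finset.range n, A (p k) (p (k + 1))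

/-- The max-plus star kernel `A*`: supremum of weights of paths of length `≥ 0`. -/
def star (A : S → S → EReal) (i j : S) : EReal :=
  ⨆ (n : ℕ) (p : ℕ → S) (_ : p 0 = i ∧ p n = j), pathWeight A p n

/-- The max-plus kernel `A⁺`: supremum of weights of paths of length `≥ 1`. -/
def plus (A : S → S → EReal) (i j : S) : EReal :=
  ⨆ (n : ℕ) (_ : 1 ≤ n) (p : ℕ → S) (_ : p 0 = i ∧ p n = j), pathWeight A p n

/-- `π` is a left super-harmonic row vector (with full support, being real valued). -/
def LeftSuperharmonic (A : S → S → EReal) (π : S → ℝ) : Prop :=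
  ∀ j, (⨆ i, ((π i : EReal) + A i j)) ≤ (π j : EReal)

/-- The Martin kernel `K_{ij} = A*_{ij} - π_j`. -/
def K (A : S → S → EReal) (π : S → ℝ) (i j : S) : EReal :=
  star A i j - (π j : EReal)

/-- `K♭_{ij} = A⁺_{ij} - π_j`. -/
def Kflat (A : S → S → EReal) (π : S → ℝ) (i j : S) : EReal :=
  plus A i j - (π j : EReal)

/-- The set `𝒦` of columns of the Martin kernel. -/
def kerCols (A : S → S → EReal) (π : S → ℝ) : Set (S → EReal) :=
  Set.range fun j => fun i => K A π i j

/-- The Martin space `ℳ`: closure of `𝒦` in the product topology. -/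
def martin (A : S → S → EReal) (π : S → ℝ) : Set (S → EReal) :=
  closure (kerCols A π)

/-- `μ_u(w)`: the limsup of `π_j + u_j` as `K_{·j} → w`. -/
def mu (A : S → S → EReal) (π : S → ℝ) (u : S → EReal) (w : S → EReal) : EReal :=
  ⨅ (W : Set (S → EReal)) (_ : W ∈ 𝓝 w),
    ⨆ (j : S) (_ : (fun i => K A π i j) ∈ W), ((π j : EReal) + u j)

/-- `w♭_i`: the liminf of `K♭_{ij}` as `K_{·j} → w`. -/
def flat (A : S → S → EReal) (π : S → ℝ) (w : S → EReal) (i : S) : EReal :=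
  ⨆ (W : Set (S → EReal)) (_ : W ∈ 𝓝 w),
    ⨅ (j : S) (_ : (fun i' => K A π i' j) ∈ W), Kflat A π i j

/-- The kernel `H(z,w) = μ_w(z)`. -/
def H (A : S → S → EReal) (π : S → ℝ) (z w : S → EReal) : EReal := mu A π w z

/-- The kernel `H♭(z,w) = μ_{w♭}(z)`. -/
def Hflat (A : S → S → EReal) (π : S → ℝ) (z w : S → EReal) : EReal :=
  mu A π (flat A π w) z

/-- The minimal Martin space `ℳᵐ = {w ∈ ℳ : H♭(w,w) = 0}`. -/
def martinMin (A : S → S → EReal) (π : S → ℝ) : Set (S → EReal) :=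
  {w | w ∈ martin A π ∧ Hflat A π w w = 0}

/-- The maximal circuit mean `ρ(A)`. -/
def maxCircuitMean (A : S → S → EReal) : EReal :=
  ⨆ (k : ℕ) (_ : 1 ≤ k) (p : ℕ → S) (_ : p k = p 0),
    (((k : ℝ)⁻¹ : ℝ) : EReal) * pathWeight A p k

/-- `α`-almost-geodesic with respect to the left super-harmonic vector `π`. -/
def IsAlmostGeodesic (A : S → S → EReal) (π : S → ℝ) (x : ℕ → S) : Prop :=
  ∃ α : ℝ, 0 ≤ α ∧ ∀ k : ℕ,
    (π (x k) : EReal) ≤ (α : EReal) + (π (x 0) : EReal) + pathWeight A x k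

/-- The set `𝒮` of `π`-integrable super-harmonic vectors. -/
def Sset (A : S → S → EReal) (π : S → ℝ) : Set (S → EReal) :=
  {u | (∀ i, u i ≠ ⊤) ∧ (∀ i, (⨆ j, A i j + u j) ≤ u i) ∧
    (⨆ j, ((π j : EReal) + u j)) < ⊤}

/-- The set `ℋ` of `π`-integrable harmonic vectors. -/
def Hset (A : S → S → EReal) (π : S → ℝ) : Set (S → EReal) :=
  {u | (∀ i, u i ≠ ⊤) ∧ (∀ i, (⨆ j, A i j + u j) = u i) ∧
    (⨆ j, ((π j : EReal) + u j)) < ⊤}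

/-- A vector is normalised if `sup_j (π_j + u_j) = 0`. -/
def Normalised (π : S → ℝ) (u : S → EReal) : Prop :=
  (⨆ j, ((π j : EReal) + u j)) = 0

/-- `ξ` is an extremal generator of `V`. -/
def ExtremalGen (V : Set (S → EReal)) (ξ : S → EReal) : Prop :=
  ξ ∈ V ∧ ξ ≠ (fun _ => (⊥ : EReal)) ∧
    ∀ u v, u ∈ V → v ∈ V → ξ = (fun i => u i ⊔ v i) → ξ = u ∨ ξ = v

end MaxPlus
namespace MaxPlus

variable {S : Type*} [MetricSpace S]

/-- The max-plus kernel associated to a metric: `A_{ij} = -d(i,j)`. -/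
def metKer (S : Type*) [MetricSpace S] : S → S → EReal :=
  fun i j => ((-dist i j : ℝ) : EReal)

/-- The left super-harmonic vector `π = -d(b, ·)` given by a basepoint `b`. -/
def metPi (b : S) : S → ℝ := fun j => -dist b j

/-- A Rieffel almost-geodesic: `γ : T → S` with `T ⊆ [0,∞)` unbounded, `0 ∈ T`, such that
for all `ε > 0`, for all sufficiently large `s ∈ T` and all `t ∈ T` with `t ≥ s`,
`|d(γ(t),γ(s)) + d(γ(s),γ(0)) − t| < ε`. -/
def IsRieffelAlmostGeodesic (T : Set ℝ) (γ : ℝ → S) : Prop :=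
  (0 : ℝ) ∈ T ∧ (∀ t ∈ T, 0 ≤ t) ∧ ¬ BddAbove T ∧
    ∀ ε : ℝ, 0 < ε → ∃ M : ℝ, ∀ s ∈ T, M ≤ s → ∀ t ∈ T, s ≤ t →
      |dist (γ t) (γ s) + dist (γ s) (γ 0) - t| < ε

/-- A Busemann point of the metric space `S`: an element of the Martin space `ℳ` which is
the limit of the net `(K_{·γ(t)})_{t ∈ T}` for some Rieffel almost-geodesic `γ`. -/
def IsBusemannPoint (b : S) (w : S → EReal) : Prop :=
  w ∈ martin (metKer S) (metPi b) ∧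
    ∃ (T : Set ℝ) (γ : ℝ → S), IsRieffelAlmostGeodesic T γ ∧
      Tendsto (fun t : T => fun i => K (metKer S) (metPi b) i (γ t)) atTop (𝓝 w)

end MaxPlus

/-!
For the metric kernel, `A⁺ = A* = -d`, so `w♭ = w` on `ℳ` and `H♭(w, w)` is the limsup of
`w_j - d(b, j)` as `K_{·j} → w`; it is always `≤ 0` because `w ≤ d(b, ·)`, and a column `K_{·j}`
reaches `0` at `j` itself. Along an almost-geodesic `γ`, the limit `w` of `K_{·γ(t)}` satisfies
`w(γ s) ≥ w(γ 0) + d(γ 0, γ s) - ε` for large `s`: this forces the limsup to vanish, and makes `w`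
unbounded, whereas `K_{·j} ≤ d(b, j)`.

Conversely, let `w ∈ ℳᵐ \ 𝒦`. Properness makes `d(b, j) → ∞` as `K_{·j} → w`, so one can choose
`x (n + 1)` far out with `w(x (n + 1)) ≈ d(b, x (n + 1))` and `K_{·x(n+1)}` close to `w` at `x n`
and at the first points of a dense sequence. Then each step from `x n` to `x (n + 1)` is almost
aligned with `b`, with summable defects, and `x` reparametrised by `d(b, ·)` is an almost-geodesic
along which `K_{·x n} → w`.
-/

theorem Equicontinuous.tendsto_of_denseRange {ι κ X α : Type*} [TopologicalSpace X]
    [UniformSpace α] {l : Filter ι} {F : ι → X → α} {f : X → α} (hF : Equicontinuous F)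
    (hf : Continuous f) {e : κ → X} (he : DenseRange e)
    (h : ∀ m, Tendsto (F · (e m)) l (𝓝 (f (e m)))) (x : X) : Tendsto (F · x) l (𝓝 (f x)) := by
  have hcl := (hF.isClosed_setOfPred_tendsto hf).closure_subset_iff.2 (Set.range_subset_iff.2 h)
  rw [he.closure_range] at hcl
  exact hcl trivial

theorem dist_add_dist_le_of_forall_succ {X : Type*} [PseudoMetricSpace X] (p : X) (x : ℕ → X)
    (a : ℕ → ℝ)
    (hstep : ∀ n, dist p (x n) + dist (x n) (x (n + 1)) ≤ dist p (x (n + 1)) + (a n - a (n + 1)))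
    {k l : ℕ} (hkl : k ≤ l) : dist p (x k) + dist (x k) (x l) ≤ dist p (x l) + (a k - a l) := by
  induction l, hkl using Nat.le_induction with
  | base => simp
  | succ l _ ih => linarith [hstep l, dist_triangle (x k) (x l) (x (l + 1))]

namespace MaxPlus

section General

variable {S : Type*} (A : S → S → EReal) (π : S → ℝ)

def kerCol (j : S) : S → EReal := fun i => K A π i j

/-- The filter of those `j` for which `K_{·j}` is close to `w`: `μ_u(w)` is a limsup and `w♭` a
liminf along it. -/
def martinFilter (w : S → EReal) : Filter S := comap (kerCol A π) (𝓝 w)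

variable {A π} {w : S → EReal}

theorem pathWeight_one (p : ℕ → S) : pathWeight A p 1 = A (p 0) (p 1) := by
  simp [pathWeight]

theorem tendsto_kerCol_martinFilter : Tendsto (kerCol A π) (martinFilter A π w) (𝓝 w) :=
  tendsto_comap

theorem martinFilter_neBot (hw : w ∈ martin A π) : (martinFilter A π w).NeBot := by
  refine comap_neBot_iff.2 fun W hW => ?_
  obtain ⟨_, hW, j, rfl⟩ := mem_closure_iff_nhds.1 hw W hW
  exact ⟨j, hW⟩

theorem mu_eq_limsup (u : S → EReal) :
    mu A π u w = limsup (fun j => (π j : EReal) + u j) (martinFilter A π w) :=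
  (((𝓝 w).basis_sets.comap _).limsup_eq_iInf_iSup).symm

theorem flat_eq_liminf (i : S) :
    flat A π w i = liminf (fun j => Kflat A π i j) (martinFilter A π w) :=
  (((𝓝 w).basis_sets.comap _).liminf_eq_iSup_iInf).symm

theorem flat_eq_self (h : plus A = star A) (hw : w ∈ martin A π) : flat A π w = w := by
  have := martinFilter_neBot hw
  funext i
  have hK : Kflat A π i = fun j => kerCol A π j i := by funext j; simp only [Kflat, h]; rfl
  rw [flat_eq_liminf, hK]
  exact ((continuous_apply i).tendsto w |>.comp tendsto_kerCol_martinFilter).liminf_eq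

theorem Hflat_self_eq_limsup (h : plus A = star A) (hw : w ∈ martin A π) :
    Hflat A π w w = limsup (fun j => (π j : EReal) + w j) (martinFilter A π w) := by
  rw [Hflat, flat_eq_self h hw, mu_eq_limsup]

end General

variable {S : Type*} [MetricSpace S]

theorem pathWeight_metKer_le (p : ℕ → S) (n : ℕ) :
    pathWeight (metKer S) p n ≤ metKer S (p 0) (p n) := by
  induction n with
  | zero => simp [pathWeight, metKer]
  | succ n ih =>
    rw [pathWeight, Finset.sum_range_succ, ← pathWeight]
    calc pathWeight (metKer S) p n + metKer S (p n) (p (n + 1))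
        ≤ ((-dist (p 0) (p n) + -dist (p n) (p (n + 1)) : ℝ) : EReal) := by
          rw [EReal.coe_add]; exact add_le_add ih le_rfl
      _ ≤ metKer S (p 0) (p (n + 1)) := by
          rw [metKer, EReal.coe_le_coe_iff]; linarith [dist_triangle (p 0) (p n) (p (n + 1))]

theorem star_metKer (i j : S) : star (metKer S) i j = metKer S i j := by
  refine le_antisymm (iSup₂_le fun n p => iSup_le fun hp => ?_) ?_
  · simpa only [hp.1, hp.2] using pathWeight_metKer_le p n
  · refine le_iSup₂_of_le 1 (fun m => if m = 0 then i else j) (le_iSup_of_le (by simp) ?_)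
    simp [pathWeight_one]

theorem plus_metKer (i j : S) : plus (metKer S) i j = metKer S i j := by
  refine le_antisymm (iSup₂_le fun n _ => iSup₂_le fun p hp => ?_) ?_
  · simpa only [hp.1, hp.2] using pathWeight_metKer_le p n
  · refine le_iSup₂_of_le 1 le_rfl
      (le_iSup₂_of_le (fun m => if m = 0 then i else j) (by simp) ?_)
    simp [pathWeight_one]

theorem plus_metKer_eq_star : plus (metKer S) = star (metKer S) := by
  funext i j
  rw [plus_metKer, star_metKer]

theorem kerCol_metKer_apply (b i j : S) :
    kerCol (metKer S) (metPi b) j i = ((dist b j - dist i j : ℝ) : EReal) := by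
  rw [kerCol, K, star_metKer, metKer, metPi, ← EReal.coe_sub, sub_neg_eq_add, add_comm]
  rfl

theorem continuous_kerCol_metKer (b : S) : Continuous (kerCol (metKer S) (metPi b)) := by
  refine continuous_pi fun i => ?_
  simp only [kerCol_metKer_apply]
  exact continuous_coe_real_ereal.comp (by fun_prop)

variable {b : S} {w : S → EReal}

local notation "𝓜" b => martin (metKer _) (metPi b)

theorem apply_mem_Icc_of_mem_martin (hw : w ∈ 𝓜 b) (i : S) :
    w i ∈ Set.Icc ((-dist b i : ℝ) : EReal) (dist b i) := by
  have := martinFilter_neBot hw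
  refine isClosed_Icc.mem_of_tendsto ((continuous_apply i).tendsto w |>.comp
    (tendsto_kerCol_martinFilter (A := metKer S) (π := metPi b))) (.of_forall fun j => ?_)
  simp only [Function.comp_apply, kerCol_metKer_apply, Set.mem_Icc, EReal.coe_le_coe_iff]
  constructor <;> linarith [dist_triangle b i j, dist_triangle i b j, dist_comm i b]

theorem coe_toReal_apply_of_mem_martin (hw : w ∈ 𝓜 b) (i : S) : ((w i).toReal : EReal) = w i := by
  obtain ⟨hlo, hhi⟩ := apply_mem_Icc_of_mem_martin hw i
  exact EReal.coe_toReal (hhi.trans_lt (EReal.coe_lt_top _)).ne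
    ((EReal.bot_lt_coe _).trans_le hlo).ne'

theorem abs_toReal_apply_le_of_mem_martin (hw : w ∈ 𝓜 b) (i : S) : |(w i).toReal| ≤ dist b i := by
  have h := apply_mem_Icc_of_mem_martin hw i
  rw [← coe_toReal_apply_of_mem_martin hw i, Set.mem_Icc, EReal.coe_le_coe_iff,
    EReal.coe_le_coe_iff] at h
  exact abs_le.2 h

theorem tendsto_kerCol_iff_of_mem_martin (hw : w ∈ 𝓜 b) {ι : Type*} {l : Filter ι} {φ : ι → S} :
    Tendsto (fun k => kerCol (metKer S) (metPi b) (φ k)) l (𝓝 w) ↔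
      ∀ i, Tendsto (fun k => dist b (φ k) - dist i (φ k)) l (𝓝 (w i).toReal) := by
  refine tendsto_pi_nhds.trans (forall_congr' fun i => ?_)
  conv_lhs => rw [← coe_toReal_apply_of_mem_martin hw i]
  simp only [kerCol_metKer_apply, EReal.tendsto_coe]

theorem tendsto_martinFilter (hw : w ∈ 𝓜 b) (i : S) :
    Tendsto (fun j => dist b j - dist i j) (martinFilter (metKer S) (metPi b) w)
      (𝓝 (w i).toReal) :=
  (tendsto_kerCol_iff_of_mem_martin hw).1 tendsto_kerCol_martinFilter i

theorem lipschitzWith_toReal_of_mem_martin (hw : w ∈ 𝓜 b) :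
    LipschitzWith 1 fun i => (w i).toReal := by
  have := martinFilter_neBot hw
  refine LipschitzWith.of_dist_le_mul fun i i' => ?_
  rw [NNReal.coe_one, one_mul]
  refine le_of_tendsto ((tendsto_martinFilter hw i).dist (tendsto_martinFilter hw i'))
    (.of_forall fun j => ?_)
  rw [Real.dist_eq, sub_sub_sub_cancel_left, abs_sub_comm]
  exact abs_dist_sub_le i i' j

theorem mem_martinMin_iff (hw : w ∈ 𝓜 b) :
    w ∈ martinMin (metKer S) (metPi b) ↔
      ∀ ε > 0, ∃ᶠ j in martinFilter (metKer S) (metPi b) w, dist b j - ε < (w j).toReal := by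
  have hsum : ∀ j, (metPi b j : EReal) + w j = ((-dist b j + (w j).toReal : ℝ) : EReal) := by
    intro j
    rw [EReal.coe_add, coe_toReal_apply_of_mem_martin hw]
    rfl
  have hle : ∀ j, -dist b j + (w j).toReal ≤ 0 := fun j => by
    linarith [le_abs_self (w j).toReal, abs_toReal_apply_le_of_mem_martin hw j]
  simp only [martinMin, Set.mem_ofPred_eq, hw, true_and,
    Hflat_self_eq_limsup plus_metKer_eq_star hw, hsum]
  rw [le_antisymm_iff, and_iff_right (limsup_le_of_le (h := .of_forall fun j => ?_)),
    le_limsup_iff]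
  · constructor
    · intro h ε hε
      refine (h (-ε : ℝ) (by exact_mod_cast neg_neg_of_pos hε)).mono fun j hj => ?_
      linarith [EReal.coe_lt_coe_iff.1 hj]
    · intro h y hy
      obtain ⟨z, hyz, hz⟩ := EReal.exists_between_coe_real hy
      have hz : z < 0 := by exact_mod_cast hz
      refine (h (-z) (by linarith)).mono fun j hj => hyz.trans ?_
      exact EReal.coe_lt_coe_iff.2 (by linarith)
  · exact_mod_cast hle j

theorem kerCol_mem_martinMin (b j : S) :
    kerCol (metKer S) (metPi b) j ∈ martinMin (metKer S) (metPi b) := by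
  have hw : kerCol (metKer S) (metPi b) j ∈ 𝓜 b := subset_closure (Set.mem_range_self j)
  have hpure : pure j ≤ martinFilter (metKer S) (metPi b) (kerCol (metKer S) (metPi b) j) :=
    map_le_iff_le_comap.1 (pure_le_nhds _)
  refine (mem_martinMin_iff hw).2 fun ε hε => (frequently_pure.2 ?_).filter_mono hpure
  rw [kerCol_metKer_apply, EReal.toReal_coe, dist_self, sub_zero]
  linarith

theorem tendsto_dist_martinFilter_of_notMem_kerCols [ProperSpace S]
    (hnk : w ∉ kerCols (metKer S) (metPi b)) :
    Tendsto (dist b) (martinFilter (metKer S) (metPi b) w) atTop := by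
  refine tendsto_atTop.2 fun R => ?_
  by_contra hR
  have hK : IsCompact (kerCol (metKer S) (metPi b) '' Metric.closedBall b R) :=
    (isCompact_closedBall b R).image (continuous_kerCol_metKer b)
  have hcl : w ∈ closure (kerCol (metKer S) (metPi b) '' Metric.closedBall b R) := by
    refine mem_closure_iff_frequently.2 ((frequently_comap.1 (not_eventually.1 hR)).mono ?_)
    rintro _ ⟨j, rfl, hj⟩
    exact ⟨j, Metric.mem_closedBall'.2 (le_of_not_ge hj), rfl⟩
  rw [hK.isClosed.closure_eq] at hcl
  obtain ⟨j, -, rfl⟩ := hcl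
  exact hnk ⟨j, rfl⟩

namespace IsRieffelAlmostGeodesic

variable {T : Set ℝ} {γ : ℝ → S}

theorem nonempty (h : IsRieffelAlmostGeodesic T γ) : Nonempty T := ⟨⟨0, h.1⟩⟩

theorem tendsto_coe_atTop (h : IsRieffelAlmostGeodesic T γ) :
    Tendsto (fun t : T => (t : ℝ)) atTop atTop :=
  tendsto_atTop_atTop_of_monotone (fun _ _ => id) fun r =>
    let ⟨t, ht, hrt⟩ := not_bddAbove_iff.1 h.2.2.1 r
    ⟨⟨t, ht⟩, hrt.le⟩

theorem exists_forall_abs_lt (h : IsRieffelAlmostGeodesic T γ) {ε : ℝ} (hε : 0 < ε) :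
    ∃ M : T, ∀ s ≥ M, ∀ t ≥ s, |dist (γ t) (γ s) + dist (γ s) (γ 0) - t| < ε := by
  have := h.nonempty
  obtain ⟨M, hM⟩ := h.2.2.2 ε hε
  obtain ⟨M', hM'⟩ := eventually_atTop.1 (h.tendsto_coe_atTop.eventually_ge_atTop M)
  exact ⟨M', fun s hs t hst => hM s s.2 (hM' s hs) t t.2 hst⟩

theorem tendsto_dist_atTop (h : IsRieffelAlmostGeodesic T γ) :
    Tendsto (fun s : T => dist (γ 0) (γ s)) atTop atTop := by
  obtain ⟨M, hM⟩ := h.exists_forall_abs_lt one_pos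
  refine tendsto_atTop_mono' _ ((eventually_ge_atTop M).mono fun s hs => ?_)
    (tendsto_atTop_add_const_right _ (-1) h.tendsto_coe_atTop)
  have := hM s hs s le_rfl
  rw [dist_self, zero_add, dist_comm, abs_lt] at this
  linarith [this.1]

theorem eventually_dist_add_dist_le (h : IsRieffelAlmostGeodesic T γ) {ε : ℝ} (hε : 0 < ε) :
    ∀ᶠ s : T in atTop, ∀ t ≥ s, dist (γ 0) (γ s) + dist (γ s) (γ t) ≤ dist (γ 0) (γ t) + ε := by
  obtain ⟨M, hM⟩ := h.exists_forall_abs_lt (half_pos hε)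
  refine (eventually_ge_atTop M).mono fun s hs t hst => ?_
  have hst' := abs_lt.1 (hM s hs t hst)
  have htt := abs_lt.1 (hM t (hs.trans hst) t le_rfl)
  rw [dist_self, zero_add] at htt
  rw [dist_comm (γ 0) (γ s), dist_comm (γ 0) (γ t), dist_comm (γ s) (γ t)]
  linarith [hst'.2, htt.1]

end IsRieffelAlmostGeodesic

theorem eventually_toReal_apply_ge_of_tendsto {T : Set ℝ} {γ : ℝ → S} (hw : w ∈ 𝓜 b)
    (hγ : IsRieffelAlmostGeodesic T γ)
    (hconv : Tendsto (fun t : T => kerCol (metKer S) (metPi b) (γ t)) atTop (𝓝 w))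
    {ε : ℝ} (hε : 0 < ε) :
    ∀ᶠ s : T in atTop, (w (γ 0)).toReal + dist (γ 0) (γ s) ≤ (w (γ s)).toReal + ε := by
  have := hγ.nonempty
  have hlim := (tendsto_kerCol_iff_of_mem_martin hw).1 hconv
  filter_upwards [hγ.eventually_dist_add_dist_le hε] with s hs
  have hlow := (hlim (γ 0)).add_const (dist (γ 0) (γ s) - ε)
  have := le_of_tendsto_of_tendsto hlow (hlim (γ s)) <|
    (eventually_ge_atTop s).mono fun t hst => by linarith [hs t hst]
  linarith

theorem IsBusemannPoint.mem_martinMin (h : IsBusemannPoint b w) :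
    w ∈ martinMin (metKer S) (metPi b) := by
  obtain ⟨hw, T, γ, hγ, hconv⟩ := h
  have := hγ.nonempty
  refine (mem_martinMin_iff hw).2 fun ε hε => ?_
  refine (tendsto_comap_iff.2 hconv).frequently (Eventually.frequently ?_)
  filter_upwards [eventually_toReal_apply_ge_of_tendsto hw hγ hconv (half_pos hε),
    ((tendsto_kerCol_iff_of_mem_martin hw).1 hconv (γ 0)).eventually_lt_const
      (lt_add_of_pos_right _ (half_pos hε))] with s hs hs'
  linarith

theorem IsBusemannPoint.notMem_kerCols (h : IsBusemannPoint b w) :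
    w ∉ kerCols (metKer S) (metPi b) := by
  rintro ⟨j, rfl⟩
  change IsBusemannPoint b (kerCol (metKer S) (metPi b) j) at h
  obtain ⟨hw, T, γ, hγ, hconv⟩ := h
  have := hγ.nonempty
  obtain ⟨s, hs, hfar⟩ := (eventually_toReal_apply_ge_of_tendsto hw hγ hconv one_pos |>.and
    (hγ.tendsto_dist_atTop.eventually_gt_atTop
      (dist b j + 1 - (kerCol (metKer S) (metPi b) j (γ 0)).toReal))).exists
  simp only [kerCol_metKer_apply, EReal.toReal_coe] at hs hfar
  linarith [dist_nonneg (x := γ s) (y := j)]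

theorem exists_isRieffelAlmostGeodesic_of_seq (x : ℕ → S) (a : ℕ → ℝ)
    (ha : Tendsto a atTop (𝓝 0)) (hmono : StrictMono fun n => dist (x 0) (x n))
    (htop : Tendsto (fun n => dist (x 0) (x n)) atTop atTop)
    (hstep : ∀ n, dist (x 0) (x n) + dist (x n) (x (n + 1)) ≤
      dist (x 0) (x (n + 1)) + (a n - a (n + 1))) :
    ∃ (T : Set ℝ) (γ : ℝ → S), IsRieffelAlmostGeodesic T γ ∧
      Tendsto (fun t : T => γ t) atTop (map x atTop) := by
  set t := fun n => dist (x 0) (x n)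
  have hanti : Antitone a := antitone_nat_of_succ_le fun n => by
    linarith [hstep n, dist_triangle (x 0) (x n) (x (n + 1))]
  set γ := Function.extend t x fun _ => x 0
  have hγ : ∀ n, γ (t n) = x n := hmono.injective.extend_apply _ _
  have hγ0 : γ 0 = x 0 := by simpa [t] using hγ 0
  refine ⟨Set.range t, γ, ⟨⟨0, by simp [t]⟩, ?_, not_bddAbove_of_tendsto_atTop htop, ?_⟩, ?_⟩
  · rintro _ ⟨n, rfl⟩
    exact dist_nonneg
  · intro ε hε
    obtain ⟨K, hK⟩ := eventually_atTop.1 (ha.eventually (gt_mem_nhds hε))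
    refine ⟨t K, ?_⟩
    rintro _ ⟨k, rfl⟩ hk _ ⟨l, rfl⟩ hkl
    rw [hmono.le_iff_le] at hk hkl
    rw [hγ, hγ, hγ0, dist_comm (x l) (x k), dist_comm (x k) (x 0), abs_lt]
    have := dist_add_dist_le_of_forall_succ (x 0) x a hstep hkl
    have htl : t l = dist (x 0) (x l) := rfl
    constructor <;> linarith [dist_triangle (x 0) (x k) (x l), hK k hk, hanti.le_of_tendsto ha l]
  · have he : (fun τ : Set.range t => γ τ) = x ∘ (hmono.orderIso t).symm := by
      funext τ
      obtain ⟨n, rfl⟩ := (hmono.orderIso t).surjective τ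
      rw [Function.comp_apply, OrderIso.symm_apply_apply]
      exact hγ n
    rw [he]
    exact tendsto_map.comp (hmono.orderIso t).symm.tendsto_atTop

theorem exists_near_far_of_mem_martinMin [ProperSpace S] (hw : w ∈ martinMin (metKer S) (metPi b))
    (hnk : w ∉ kerCols (metKer S) (metPi b)) (I : Finset S) {ε : ℝ} (hε : 0 < ε) (R : ℝ) :
    ∃ y, (∀ i ∈ I, |dist b y - dist i y - (w i).toReal| < ε) ∧
      dist b y - ε < (w y).toReal ∧ R < dist b y := by
  have hnear : ∀ i ∈ I, ∀ᶠ y in martinFilter (metKer S) (metPi b) w,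
      |dist b y - dist i y - (w i).toReal| < ε := fun i _ => by
    simpa only [Real.dist_eq] using Metric.tendsto_nhds.1 (tendsto_martinFilter hw.1 i) ε hε
  obtain ⟨y, hy, hnear, hfar⟩ := ((mem_martinMin_iff hw.1).1 hw ε hε |>.and_eventually
    ((I.eventually_all.2 hnear).and
      ((tendsto_dist_martinFilter_of_notMem_kerCols hnk).eventually_gt_atTop R))).exists
  exact ⟨y, hnear, hy, hfar⟩

theorem exists_seq_of_mem_martinMin [ProperSpace S] (hw : w ∈ martinMin (metKer S) (metPi b))
    (hnk : w ∉ kerCols (metKer S) (metPi b)) :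
    ∃ x : ℕ → S, x 0 = b ∧ StrictMono (fun n => dist b (x n)) ∧
      Tendsto (fun n => dist b (x n)) atTop atTop ∧
      -- the defect of step `n` is below `2⁻ⁿ + 2⁻⁽ⁿ⁺¹⁾ = 3 * 2⁻ⁿ - 3 * 2⁻⁽ⁿ⁺¹⁾`
      (∀ n, dist b (x n) + dist (x n) (x (n + 1)) ≤
        dist b (x (n + 1)) + (3 * (1 / 2 : ℝ) ^ n - 3 * (1 / 2 : ℝ) ^ (n + 1))) ∧
      Tendsto (fun n => kerCol (metKer S) (metPi b) (x n)) atTop (𝓝 w) := by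
  classical
  have hmem := hw.1
  have : Nonempty S := ⟨b⟩
  set e := TopologicalSpace.denseSeq S
  choose next hnext using fun n z => exists_near_far_of_mem_martinMin hw hnk
    (insert z ((Finset.range (n + 1)).image e)) (pow_pos (one_half_pos (α := ℝ)) (n + 1))
    (dist b z + 1)
  set x : ℕ → S := fun n => Nat.rec b next n
  have hx : ∀ n, x (n + 1) = next n (x n) := fun n => rfl
  have hgrow : ∀ n, dist b (x n) + 1 < dist b (x (n + 1)) := fun n => (hnext n (x n)).2.2
  have hclose : ∀ n, dist b (x n) - (1 / 2 : ℝ) ^ n < (w (x n)).toReal := by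
    rintro (_ | n)
    · have := abs_toReal_apply_le_of_mem_martin hmem b
      rw [dist_self, abs_nonpos_iff] at this
      simp [x, this]
    · exact (hnext n (x n)).2.1
  refine ⟨x, rfl, strictMono_nat_of_lt_succ fun n => by linarith [hgrow n], ?_, fun n => ?_, ?_⟩
  · have hlin : ∀ n : ℕ, (n : ℝ) ≤ dist b (x n) := fun n => by
      induction n with
      | zero => simp
      | succ n ih => push_cast; linarith [hgrow n]
    exact tendsto_atTop_mono hlin tendsto_natCast_atTop_atTop
  · have hnear := abs_lt.1 ((hnext n (x n)).1 (x n) (Finset.mem_insert_self _ _))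
    rw [← hx] at hnear
    linarith [hclose n, hnear.1, pow_succ (1 / 2 : ℝ) n]
  · rw [tendsto_kerCol_iff_of_mem_martin hmem]
    refine Equicontinuous.tendsto_of_denseRange ?_
      (lipschitzWith_toReal_of_mem_martin hmem).continuous
      (TopologicalSpace.denseRange_denseSeq S) fun m => ?_
    · refine (LipschitzWith.uniformEquicontinuous _ 1 fun n => ?_).equicontinuous
      refine LipschitzWith.of_dist_le_mul fun i i' => ?_
      rw [NNReal.coe_one, one_mul, Real.dist_eq, sub_sub_sub_cancel_left, abs_sub_comm]
      exact abs_dist_sub_le i i' (x n)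
    · rw [tendsto_iff_dist_tendsto_zero, ← tendsto_add_atTop_iff_nat 1]
      refine squeeze_zero' (.of_forall fun _ => dist_nonneg)
        (eventually_atTop.2 ⟨m, fun n hn => ?_⟩)
        ((tendsto_pow_atTop_nhds_zero_of_lt_one (r := (1 / 2 : ℝ)) (by norm_num) (by norm_num)).comp
          (tendsto_add_atTop_nat 1))
      rw [Real.dist_eq, hx]
      refine ((hnext n (x n)).1 (e m) (Finset.mem_insert_of_mem ?_)).le
      exact Finset.mem_image_of_mem e (Finset.mem_range.2 (by omega))

theorem isBusemannPoint_of_mem_martinMin [ProperSpace S]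
    (hw : w ∈ martinMin (metKer S) (metPi b)) (hnk : w ∉ kerCols (metKer S) (metPi b)) :
    IsBusemannPoint b w := by
  obtain ⟨x, rfl, hmono, htop, hstep, hconv⟩ := exists_seq_of_mem_martinMin hw hnk
  obtain ⟨T, γ, hγ, hγx⟩ := exists_isRieffelAlmostGeodesic_of_seq x _
    (by simpa using (tendsto_pow_atTop_nhds_zero_of_lt_one (r := (1 / 2 : ℝ)) (by norm_num)
      (by norm_num)).const_mul 3)
    hmono htop hstep
  have hconv' : Tendsto (kerCol (metKer S) (metPi (x 0))) (map x atTop) (𝓝 w) :=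
    tendsto_map'_iff.2 hconv
  exact ⟨hw.1, T, γ, hγ, hconv'.comp hγx⟩

/-- for a proper metric space `(S,d)`, the minimal Martin space is the
disjoint union of `𝒦` and the set of Busemann points. -/
theorem martinMin_eq_kerCols_union_busemann (S : Type*) [MetricSpace S]
    [ProperSpace S] (b : S) :
    martinMin (metKer S) (metPi b) =
      kerCols (metKer S) (metPi b) ∪ {w | IsBusemannPoint b w} ∧
    ∀ w : S → EReal, IsBusemannPoint b w → w ∉ kerCols (metKer S) (metPi b) := by
  refine ⟨Set.Subset.antisymm (fun w hw => ?_) ?_, fun w hw => hw.notMem_kerCols⟩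
  · by_cases hk : w ∈ kerCols (metKer S) (metPi b)
    · exact Or.inl hk
    · exact Or.inr (isBusemannPoint_of_mem_martinMin hw hk)
  · rintro w (⟨j, rfl⟩ | hw)
    · exact kerCol_mem_martinMin b j
    · exact hw.mem_martinMin

end MaxPlus
end
end

section
/- Assume S is infinite, A is irreducible, and for each i ∈ S the set {j ∈ S : A_{ij} > −∞} is finite. Then the set of right eigenvalues of A is {λ ∈ ℝ : λ ≥ ρ(A)}. -/
open Filter Topology

noncomputable section

namespace MaxPlus

/-- `A` is irreducible: any two nodes are joined by a path of length `≥ 1` all of whose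
arcs have weight `> −∞`. -/
def MPIrreducible {S : Type*} (A : S → S → EReal) : Prop :=
  ∀ i j : S, ∃ (n : ℕ) (p : ℕ → S), 1 ≤ n ∧ p 0 = i ∧ p n = j ∧
    ∀ k < n, A (p k) (p (k + 1)) ≠ ⊥

/-- `lam` is a right eigenvalue of `A`: `Au = lam + u` for some `u : S → ℝ ∪ {−∞}` not
identically `−∞`. -/
def IsRightEigenvalue {S : Type*} (A : S → S → EReal) (lam : ℝ) : Prop :=
  ∃ u : S → EReal, (∀ i, u i ≠ ⊤) ∧ u ≠ (fun _ => (⊥ : EReal)) ∧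
    ∀ i, (⨆ j, A i j + u j) = (lam : EReal) + u i

/-!
If `A u = λ + u` with `u ≢ −∞`, irreducibility makes `u` finite everywhere, and summing
`A_{ij} + u_j ≤ λ + u_i` around a circuit bounds its mean by `λ`.

Conversely, for `λ ≥ ρ(A)` the matrix `B = A − λ` has no positive circuit, so `B*` is finite.
As `S` is infinite, the normalised columns `K_{·j} = B*_{·j} − B*_{bj}` of the Martin kernel
have a limit point `u` as `j → ∞` (along an ultrafilter finer than the cofinite filter), with
`u_b = 0` and `u_i ≤ −B*_{bi}`. For `j ≠ i` we have `B*_{ij} = ⨆ₖ B_{ik} + B*_{kj}`, and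
since row `i` of `B` has finitely many finite entries this identity passes to the limit:
`B u = u`.
-/

def addCoeOrderIso (r : ℝ) : EReal ≃o EReal where
  toFun x := x + r
  invFun x := x - r
  left_inv _ := EReal.add_sub_cancel_right
  right_inv _ := EReal.sub_add_cancel
  map_rel_iff' := (EReal.addLECancellable_coe r).add_le_add_iff_right

lemma iSup_sub_coe {ι : Sort*} (f : ι → EReal) (r : ℝ) :
    (⨆ i, f i) - r = ⨆ i, f i - r :=
  (addCoeOrderIso r).symm.map_iSup f

lemma sub_coe_eq_iff {x y : EReal} {r : ℝ} : x - r = y ↔ x = r + y := by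
  rw [add_comm]; exact (addCoeOrderIso r).symm_apply_eq

lemma sub_coe_ne_bot_iff {x : EReal} {r : ℝ} : x - r ≠ ⊥ ↔ x ≠ ⊥ := by
  induction x <;> simp [← EReal.coe_sub]

lemma continuous_coe_add (r : ℝ) : Continuous fun x : EReal => (r : EReal) + x := by
  have : Continuous fun x : EReal => x + r := (addCoeOrderIso r).continuous
  simpa only [add_comm] using this

section Paths

variable {S : Type*} {A : S → S → EReal}

@[simp] lemma pathWeight_zero (A : S → S → EReal) (p : ℕ → S) : pathWeight A p 0 = 0 := by
  simp [pathWeight]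

lemma pathWeight_succ (A : S → S → EReal) (p : ℕ → S) (n : ℕ) :
    pathWeight A p (n + 1) = pathWeight A p n + A (p n) (p (n + 1)) :=
  Finset.sum_range_succ _ _

lemma pathWeight_succ' (A : S → S → EReal) (p : ℕ → S) (n : ℕ) :
    pathWeight A p (n + 1) = A (p 0) (p 1) + pathWeight A (fun t => p (t + 1)) n := by
  rw [pathWeight, Finset.sum_range_succ', add_comm]; rfl

lemma pathWeight_ne_bot {p : ℕ → S} {n : ℕ} (h : ∀ k < n, A (p k) (p (k + 1)) ≠ ⊥) :
    pathWeight A p n ≠ ⊥ := by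
  induction n with
  | zero => simp
  | succ n ih =>
    rw [pathWeight_succ]
    exact EReal.add_ne_bot_iff.2 ⟨ih fun k hk => h k (by omega), h n n.lt_succ_self⟩

lemma pathWeight_sub_coe (A : S → S → EReal) (c : ℝ) (p : ℕ → S) (n : ℕ) :
    pathWeight (fun i j => A i j - c) p n = pathWeight A p n - (n * c : ℝ) := by
  induction n with
  | zero => simp
  | succ n ih =>
    rw [pathWeight_succ, pathWeight_succ, ih]
    simp only [sub_eq_add_neg, ← EReal.coe_neg]
    rw [add_add_add_comm, ← EReal.coe_add]
    congr 2
    push_cast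
    ring

lemma pathWeight_add_le {u : S → EReal} (hu : ∀ i j, A i j + u j ≤ u i)
    (p : ℕ → S) (n : ℕ) :
    pathWeight A p n + u (p n) ≤ u (p 0) := by
  induction n generalizing p with
  | zero => simp
  | succ n ih =>
    rw [pathWeight_succ', add_assoc]
    exact (add_le_add le_rfl (ih _)).trans (hu _ _)

end Paths

section Star

variable {S : Type*} {A : S → S → EReal}

lemma pathWeight_le_star {p : ℕ → S} {n : ℕ} {i j : S} (h0 : p 0 = i) (hn : p n = j) :
    pathWeight A p n ≤ star A i j :=
  le_iSup_of_le n <| le_iSup_of_le p <| le_iSup_of_le ⟨h0, hn⟩ le_rfl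

lemma exists_path_of_lt_star {i j : S} {b : EReal} (h : b < star A i j) :
    ∃ n p, p 0 = i ∧ p n = j ∧ b < pathWeight A p n := by
  obtain ⟨n, p, ⟨h0, hn⟩, h⟩ : ∃ n p, (p 0 = i ∧ p n = j) ∧ b < pathWeight A p n := by
    simpa [star, lt_iSup_iff] using h
  exact ⟨n, p, h0, hn, h⟩

lemma le_star (A : S → S → EReal) (i j : S) : A i j ≤ star A i j := by
  simpa [pathWeight] using pathWeight_le_star (A := A) (p := fun t => if t = 0 then i else j)
    (n := 1) rfl rfl

lemma add_star_le_star (A : S → S → EReal) (i k j : S) : A i k + star A k j ≤ star A i j := by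
  refine EReal.add_le_of_forall_lt fun a ha b hb => ?_
  obtain ⟨n, q, rfl, rfl, hq⟩ := exists_path_of_lt_star hb
  calc a + b ≤ A i (q 0) + pathWeight A q n := add_le_add ha.le hq.le
    _ = pathWeight A (fun t => Nat.casesOn t i q) (n + 1) := by
      rw [pathWeight_succ']; rfl
    _ ≤ star A i (q n) := pathWeight_le_star rfl rfl

lemma star_add_star_le (A : S → S → EReal) (i j k : S) :
    star A i j + star A j k ≤ star A i k := by
  refine EReal.add_le_of_forall_lt fun a ha b hb => ?_
  obtain ⟨n, p, rfl, rfl, hp⟩ := exists_path_of_lt_star ha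
  exact (add_le_add hp.le hb.le).trans
    (pathWeight_add_le (fun i' j' => add_star_le_star A i' j' k) p n)

lemma star_eq_iSup_add_star {i j : S} (hij : i ≠ j) :
    star A i j = ⨆ k, A i k + star A k j := by
  refine le_antisymm (iSup_le fun n => iSup_le fun p => iSup_le fun ⟨h0, hn⟩ => ?_)
    (iSup_le fun k => add_star_le_star A i k j)
  cases n with
  | zero => exact absurd (h0.symm.trans hn) hij
  | succ n =>
    rw [pathWeight_succ', h0]
    exact le_iSup_of_le (p 1) (add_le_add le_rfl (pathWeight_le_star rfl hn))

lemma star_ne_bot (hirr : MPIrreducible A) (i j : S) : star A i j ≠ ⊥ := by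
  obtain ⟨n, p, -, h0, hn, harc⟩ := hirr i j
  exact ne_bot_of_le_ne_bot (pathWeight_ne_bot harc) (pathWeight_le_star h0 hn)

def CircuitsNonpos (A : S → S → EReal) : Prop :=
  ∀ n (p : ℕ → S), p n = p 0 → pathWeight A p n ≤ 0

lemma star_self_nonpos (hcirc : CircuitsNonpos A) (i : S) : star A i i ≤ 0 :=
  iSup_le fun n => iSup_le fun p => iSup_le fun ⟨h0, hn⟩ => hcirc n p (hn.trans h0.symm)

lemma star_ne_top (hirr : MPIrreducible A) (hcirc : CircuitsNonpos A) (i j : S) :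
    star A i j ≠ ⊤ := by
  intro htop
  have h := (star_add_star_le A i j i).trans (star_self_nonpos hcirc i)
  rw [htop, EReal.top_add_of_ne_bot (star_ne_bot hirr j i)] at h
  exact absurd h (by simp)

end Star

lemma iSup_eq_finset_sup {ι α : Type*} [CompleteLattice α] {f : ι → α} (s : Finset ι)
    (h : ∀ k ∉ s, f k = ⊥) : ⨆ k, f k = s.sup f := by
  rw [Finset.sup_eq_iSup]
  refine iSup_congr fun k => ?_
  by_cases hk : k ∈ s <;> simp [hk, h]

section MartinKernel

variable {S : Type*} {B : S → S → EReal} {π : S → ℝ}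

lemma K_eq_iSup_add_K {i j : S} (hij : i ≠ j) : K B π i j = ⨆ k, B i k + K B π k j := by
  rw [K, star_eq_iSup_add_star hij, iSup_sub_coe]
  simp only [K, sub_eq_add_neg, add_assoc]

lemma K_le_neg {b : S} (hπ : ∀ j, (π j : EReal) = star B b j) (i j : S) :
    K B π i j ≤ ((-π i : ℝ) : EReal) := by
  have h := star_add_star_le B b i j
  rw [← hπ, ← hπ, add_comm] at h
  rw [K, EReal.sub_le_iff_le_add (.inl (EReal.coe_ne_bot _)) (.inl (EReal.coe_ne_top _)),
    ← EReal.coe_add, neg_add_eq_sub, EReal.coe_sub,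
    EReal.le_sub_iff_add_le (.inl (EReal.coe_ne_bot _)) (.inl (EReal.coe_ne_top _))]
  exact h

lemma K_base_eq_zero {b : S} (hπ : ∀ j, (π j : EReal) = star B b j) (j : S) :
    K B π b j = 0 := by
  simp [K, ← hπ]

lemma iSup_add_eq_of_tendsto_K (hirr : MPIrreducible B) (hcirc : CircuitsNonpos B) {i : S}
    (hfin : {k | B i k ≠ ⊥}.Finite) {F : Filter S} [F.NeBot] (hF : ∀ᶠ j in F, j ≠ i)
    {u : S → EReal} (hu : ∀ k, Tendsto (fun j => K B π k j) F (𝓝 (u k))) :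
    ⨆ k, B i k + u k = u i := by
  set T := hfin.toFinset
  have hT : ∀ k ∉ T, ∀ x, B i k + x = ⊥ := fun k hk x => by
    rw [not_not.1 (mt hfin.mem_toFinset.2 hk), EReal.bot_add]
  have hlim : Tendsto (fun j => T.sup fun k => B i k + K B π k j) F
      (𝓝 (T.sup fun k => B i k + u k)) := by
    refine Tendsto.finset_sup_nhds_apply fun k hk => ?_
    have hne_top := ne_top_of_le_ne_top (star_ne_top hirr hcirc i k) (le_star B i k)
    rw [← EReal.coe_toReal hne_top (hfin.mem_toFinset.1 hk)]
    exact ((continuous_coe_add _).tendsto _).comp (hu k)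
  have hK : ∀ᶠ j in F, K B π i j = T.sup fun k => B i k + K B π k j := by
    filter_upwards [hF] with j hj
    rw [K_eq_iSup_add_K (Ne.symm hj), iSup_eq_finset_sup T fun k hk => hT k hk _]
  rw [iSup_eq_finset_sup T fun k hk => hT k hk _]
  exact tendsto_nhds_unique (hlim.congr' (hK.mono fun _ h => h.symm)) (hu i)

end MartinKernel

section Eigenvectors

variable {S : Type*} {B : S → S → EReal}

theorem exists_harmonic_of_circuitsNonpos [Infinite S] (hirr : MPIrreducible B)
    (hfin : ∀ i, {j | B i j ≠ ⊥}.Finite) (hcirc : CircuitsNonpos B) :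
    ∃ u : S → EReal, (∀ i, u i ≠ ⊤) ∧ u ≠ (fun _ => ⊥) ∧
      ∀ i, ⨆ j, B i j + u j = u i := by
  obtain ⟨b⟩ := (inferInstance : Nonempty S)
  set π : S → ℝ := fun j => (star B b j).toReal
  have hπ : ∀ j, (π j : EReal) = star B b j := fun j =>
    EReal.coe_toReal (star_ne_top hirr hcirc b j) (star_ne_bot hirr b j)
  -- `u` is a limit point of the columns of the Martin kernel at infinity.
  let F : Ultrafilter S := .of cofinite
  let u : S → EReal := fun i => (F.map fun j => K B π i j).lim
  have hu : ∀ i, Tendsto (fun j => K B π i j) F (𝓝 (u i)) := fun i => (F.map _).le_nhds_lim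
  refine ⟨u, fun i => ?_, fun h => ?_, fun i => ?_⟩
  · exact ne_top_of_le_ne_top (EReal.coe_ne_top _)
      (le_of_tendsto' (hu i) fun j => K_le_neg hπ i j)
  · have hub : u b = 0 :=
      tendsto_nhds_unique (hu b)
        (tendsto_const_nhds.congr fun j => (K_base_eq_zero hπ j).symm)
    simpa [hub] using congrFun h b
  · exact iSup_add_eq_of_tendsto_K hirr hcirc (hfin i)
      (Ultrafilter.of_le cofinite (eventually_cofinite_ne i)) hu

lemma ne_bot_of_superharmonic (hirr : MPIrreducible B) {u : S → EReal}
    (hu : ∀ i j, B i j + u j ≤ u i) (hne : u ≠ fun _ => ⊥) (i : S) : u i ≠ ⊥ := by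
  obtain ⟨i₀, hi₀⟩ : ∃ i₀, u i₀ ≠ ⊥ := by
    by_contra! h
    exact hne (funext h)
  obtain ⟨n, p, -, rfl, hn, harc⟩ := hirr i i₀
  refine ne_bot_of_le_ne_bot ?_ (pathWeight_add_le hu p n)
  rw [hn]
  exact EReal.add_ne_bot_iff.2 ⟨pathWeight_ne_bot harc, hi₀⟩

lemma circuitsNonpos_of_superharmonic (hirr : MPIrreducible B) {u : S → EReal}
    (hu : ∀ i j, B i j + u j ≤ u i) (hne : u ≠ fun _ => ⊥) (htop : ∀ i, u i ≠ ⊤) :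
    CircuitsNonpos B := by
  intro n p hp
  have h := pathWeight_add_le hu p n
  rw [hp, ← EReal.coe_toReal (htop _) (ne_bot_of_superharmonic hirr hu hne _)] at h
  exact (EReal.addLECancellable_coe _).add_le_add_iff_right.1 (by simpa using h)

end Eigenvectors

section Shift

variable {S : Type*}

lemma isRightEigenvalue_iff (A : S → S → EReal) (lam : ℝ) :
    IsRightEigenvalue A lam ↔
      ∃ u : S → EReal, (∀ i, u i ≠ ⊤) ∧ u ≠ (fun _ => ⊥) ∧
        ∀ i, ⨆ j, (A i j - lam) + u j = u i := by
  have key : ∀ (u : S → EReal) i,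
      (⨆ j, (A i j - lam) + u j) = u i ↔ (⨆ j, A i j + u j) = lam + u i := fun u i => by
    rw [← sub_coe_eq_iff, iSup_sub_coe]
    simp only [sub_eq_add_neg, add_right_comm]
  simp only [IsRightEigenvalue, key]

lemma inv_mul_le_coe_iff {k : ℝ} (hk : 0 < k) {W : EReal} {lam : ℝ} :
    ((k⁻¹ : ℝ) : EReal) * W ≤ lam ↔ W ≤ (k * lam : ℝ) := by
  induction W with
  | bot => simp [EReal.coe_mul_bot_of_pos (inv_pos.2 hk)]
  | top => simp [EReal.coe_mul_top_of_pos (inv_pos.2 hk), -EReal.coe_mul]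
  | coe W =>
    rw [← EReal.coe_mul, EReal.coe_le_coe_iff, EReal.coe_le_coe_iff, inv_mul_le_iff₀ hk]

lemma maxCircuitMean_le_iff (A : S → S → EReal) (lam : ℝ) :
    maxCircuitMean A ≤ lam ↔ CircuitsNonpos fun i j => A i j - lam := by
  simp only [maxCircuitMean, iSup_le_iff, CircuitsNonpos, pathWeight_sub_coe, EReal.sub_nonpos]
  refine forall_congr' fun k => ?_
  rcases k.eq_zero_or_pos with rfl | hk
  · simp
  · simp only [Nat.one_le_iff_ne_zero.2 hk.ne', true_implies,
      inv_mul_le_coe_iff (Nat.cast_pos.2 hk)]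

end Shift

theorem rightEigenvalues_eq_Ici_rho_general {S : Type*} [Infinite S]
    (A : S → S → EReal)
    (hirr : MPIrreducible A) (hfin : ∀ i, {j | A i j ≠ ⊥}.Finite) :
    {lam : ℝ | IsRightEigenvalue A lam} =
      {lam : ℝ | maxCircuitMean A ≤ (lam : EReal)} := by
  ext lam
  simp only [Set.mem_ofPred_eq, isRightEigenvalue_iff, maxCircuitMean_le_iff]
  have hirr' : MPIrreducible fun i j => A i j - lam := fun i j => by
    simpa only [sub_coe_ne_bot_iff] using hirr i j
  have hfin' : ∀ i, {j | A i j - lam ≠ ⊥}.Finite := by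
    simpa only [sub_coe_ne_bot_iff] using hfin
  constructor
  · rintro ⟨u, htop, hne, hu⟩
    exact circuitsNonpos_of_superharmonic hirr' (fun i j => hu i ▸ le_iSup_of_le j le_rfl)
      hne htop
  · exact exists_harmonic_of_circuitsNonpos hirr' hfin'

/-- if `S` is infinite, `A` is irreducible and each row of `A` has finitely
many finite entries, then the set of right eigenvalues of `A` is `{λ : λ ≥ ρ(A)}`. -/
theorem rightEigenvalues_eq_Ici_rho {S : Type*} [Infinite S]
    (A : S → S → EReal) (hA : ∀ i j, A i j ≠ ⊤)
    (hirr : MPIrreducible A) (hfin : ∀ i, {j | A i j ≠ ⊥}.Finite) :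
    {lam : ℝ | IsRightEigenvalue A lam} =
      {lam : ℝ | maxCircuitMean A ≤ (lam : EReal)} :=
  rightEigenvalues_eq_Ici_rho_general A hirr hfin

end MaxPlus
end
end

section
/- Assume ζ(x) > −∞ for all x ∈ ℝ^n. Then a function u : ℝ^n → ℝ ∪ {−∞}, not identically −∞, is an eigenvector of the Lax-Oleinik semigroup (T^t)_{t>0} with eigenvalue −L(0) if and only if u(y) − ζ(y − x) ≤ u(x) for all x, y ∈ ℝ^n. -/
open Filter Topology

noncomputable section

namespace LaxOleinik

/-- The Lax-Oleinik operator `(T^t u)(x) = sup_y (−t·L((y−x)/t) + u(y))`. -/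
def laxOp {n : ℕ} (L : (Fin n → ℝ) → EReal) (t : ℝ) (u : (Fin n → ℝ) → EReal)
    (x : Fin n → ℝ) : EReal :=
  ⨆ y : Fin n → ℝ, (((-t : ℝ) : EReal) * L (t⁻¹ • (y - x)) + u y)

/-- Convexity for an `EReal`-valued function. -/
def ConvexFn {n : ℕ} (L : (Fin n → ℝ) → EReal) : Prop :=
  ∀ x y : Fin n → ℝ, ∀ a b : ℝ, 0 ≤ a → 0 ≤ b → a + b = 1 →
    L (a • x + b • y) ≤ (a : EReal) * L x + (b : EReal) * L y

/-- The one-sided directional derivative of `L` at the origin in the direction `x`: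
`ζ(x) = inf_{t>0} (L(tx) − L(0))/t` (which equals `lim_{t→0⁺}` by convexity). -/
def zeta {n : ℕ} (L : (Fin n → ℝ) → EReal) (x : Fin n → ℝ) : EReal :=
  ⨅ (t : ℝ) (_ : 0 < t), ((t⁻¹ : ℝ) : EReal) * (L (t • x) - L 0)

/-!
Choosing `y = x` in the supremum gives `T^t u ≥ u − t L(0)` for every `u`, so `u` is an
eigenvector for `−L(0)` iff every term of the supremum is at most `u(x) − t L(0)`. As `L(0)` is
finite, that term inequality rearranges to `u(y) − t (L((y − x)/t) − L(0)) ≤ u(x)`, whose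
left-hand side involves the difference quotient of `L` at `0` with step `1/t`; and `ζ(y − x)` is
the infimum of these quotients, which commutes with `u(y) − ·`.
-/

theorem _root_.EReal.sub_iInf_le_iff {ι : Sort*} {a b : EReal} {q : ι → EReal} :
    a - ⨅ i, q i ≤ b ↔ ∀ i, a - q i ≤ b := by
  refine ⟨fun h i => (EReal.sub_le_sub le_rfl (iInf_le q i)).trans h, fun h => ?_⟩
  refine EReal.add_le_of_forall_lt fun a' ha' b' hb' => ?_
  obtain ⟨i, hi⟩ := iInf_lt_iff.1 (EReal.lt_neg_comm.1 hb')
  exact (add_le_add ha'.le (EReal.lt_neg_comm.1 hi).le).trans (h i)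

theorem _root_.EReal.coe_neg_mul_add_le_add_coe_mul_neg_iff {t : ℝ} (ht : 0 < t) {l : EReal}
    (hl : l ≠ ⊥) (c : ℝ) (a b : EReal) :
    ((-t : ℝ) : EReal) * l + a ≤ b + (t : EReal) * -(c : EReal) ↔
      a - (t : EReal) * (l - c) ≤ b := by
  induction l using EReal.rec with
  | bot => exact absurd rfl hl
  | top =>
    simp only [EReal.coe_mul_top_of_neg (neg_lt_zero.2 ht), EReal.top_sub_coe,
      EReal.coe_mul_top_of_pos ht, EReal.sub_top, EReal.bot_add, bot_le]
  | coe l =>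
    have key : a - (t : EReal) * ((l : EReal) - c) + ((-t * c : ℝ) : EReal) =
        ((-t : ℝ) : EReal) * l + a := by
      rw [← EReal.coe_sub, ← EReal.coe_mul, sub_eq_add_neg, ← EReal.coe_neg, add_assoc,
        ← EReal.coe_add, add_comm, ← EReal.coe_mul]
      congr 2
      ring
    rw [← key, ← EReal.coe_neg, ← EReal.coe_mul, mul_neg, ← neg_mul]
    exact (EReal.addLECancellable_coe _).add_le_add_iff_right

section

variable {n : ℕ} (L : (Fin n → ℝ) → EReal)

theorem sub_zeta_le_iff (a b : EReal) (v : Fin n → ℝ) :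
    a - zeta L v ≤ b ↔ ∀ s : ℝ, 0 < s → a - ((s⁻¹ : ℝ) : EReal) * (L (s • v) - L 0) ≤ b := by
  simp only [zeta, EReal.sub_iInf_le_iff]

theorem laxOp_eq_iff (hLbot : ∀ x, L x ≠ ⊥) (hL0 : L 0 ≠ ⊤) {t : ℝ} (ht : 0 < t)
    (u : (Fin n → ℝ) → EReal) (x : Fin n → ℝ) :
    laxOp L t u x = u x + (t : EReal) * -(L 0) ↔
      ∀ y, u y - (t : EReal) * (L (t⁻¹ • (y - x)) - L 0) ≤ u x := by
  obtain ⟨c, hc⟩ : ∃ c : ℝ, L 0 = c := ⟨(L 0).toReal, (EReal.coe_toReal hL0 (hLbot 0)).symm⟩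
  have le_laxOp : u x + (t : EReal) * -(L 0) ≤ laxOp L t u x := by
    refine le_trans (le_of_eq ?_) (le_iSup _ x)
    rw [sub_self, smul_zero, hc, ← EReal.coe_neg, ← EReal.coe_mul, ← EReal.coe_mul, add_comm,
      mul_neg, neg_mul]
  rw [← le_laxOp.ge_iff_eq', laxOp, iSup_le_iff, hc]
  exact forall_congr' fun y =>
    EReal.coe_neg_mul_add_le_add_coe_mul_neg_iff ht (hLbot _) c (u y) (u x)

end

theorem eigenvector_negL0_iff_general {n : ℕ}
    (L : (Fin n → ℝ) → EReal) (hLbot : ∀ x, L x ≠ ⊥) (hL0 : L 0 ≠ ⊤)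
    (u : (Fin n → ℝ) → EReal) :
    (∀ t : ℝ, 0 < t → ∀ x, laxOp L t u x = u x + (t : EReal) * (-(L 0))) ↔
      (∀ x y, u y - zeta L (y - x) ≤ u x) := by
  constructor
  · intro h x y
    refine (sub_zeta_le_iff L _ _ _).2 fun s hs => ?_
    simpa only [inv_inv] using
      (laxOp_eq_iff L hLbot hL0 (inv_pos.2 hs) u x).1 (h s⁻¹ (inv_pos.2 hs) x) y
  · intro h t ht x
    refine (laxOp_eq_iff L hLbot hL0 ht u x).2 fun y => ?_
    simpa only [inv_inv] using (sub_zeta_le_iff L _ _ _).1 (h x y) t⁻¹ (inv_pos.2 ht)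

/-- if `ζ > −∞` everywhere, then a function `u : ℝⁿ → ℝ ∪ {−∞}`,
not identically `−∞`, is an eigenvector of the Lax-Oleinik semigroup `(T^t)_{t>0}`
with eigenvalue `−L(0)` iff `u(y) − ζ(y − x) ≤ u(x)` for all `x, y`. -/
theorem eigenvector_negL0_iff {n : ℕ} (hn : 1 ≤ n)
    (L : (Fin n → ℝ) → EReal) (hLbot : ∀ x, L x ≠ ⊥) (hL0 : L 0 ≠ ⊤)
    (hconv : ConvexFn L) (hlsc : LowerSemicontinuous L)
    (hbdd : ∃ c : ℝ, ∀ x, (c : EReal) ≤ L x)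
    (hzeta : ∀ x, zeta L x ≠ ⊥)
    (u : (Fin n → ℝ) → EReal) (hutop : ∀ x, u x ≠ ⊤)
    (hune : u ≠ fun _ => (⊥ : EReal)) :
    (∀ t : ℝ, 0 < t → ∀ x, laxOp L t u x = u x + (t : EReal) * (-(L 0))) ↔
      (∀ x y, u y - zeta L (y - x) ≤ u x) :=
  eigenvector_negL0_iff_general L hLbot hL0 u

end LaxOleinik
end
end

section
/- Let ‖·‖ be a polyhedral norm on ℝ^n with dual unit ball B′ having finite set of extreme points (x′_i)_{i∈I}, so that ‖x‖ = max_{i∈I} ⟨x′_i, x⟩. Then the Martin boundary ℳ ∖ 𝒦 of the kernel (x, y) ↦ −‖y − x‖ with basepoint 0 is exactly the set of functions of the form x ↦ min_{j∈J} ⟨x′_j, x − X⟩ + max_{j∈J} ⟨x′_j, X⟩, where X ranges over ℝ^n and (x′_j)_{j∈J} ranges over the sets of extreme points of proper faces of B′. Moreover, every point of the Martin boundary is a Busemann point of (ℝ^n, ‖·‖). -/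
/-!
Write `s_i(X) = N X - ⟨x′_i, X⟩ ≥ 0` for the slacks, so that `K_X = min_i (⟨x′_i, ·⟩ + s_i(X))`.
Along an ultrafilter on which `K_X → f`, each slack converges or tends to `+∞`, one of them tends
to `0`, and `f = min_{j∈J} (⟨x′_j, ·⟩ + lim s_j)` where `J` indexes the convergent slacks. The
range of `X ↦ (⟨x′_j - x′_{i₀}, X⟩)_{j∈J}` is closed, so these limits are realised by a base
point, and subtracting a convergent correction from `X` leaves a direction `v` with `⟨x′_i, v⟩`
maximal exactly for `i ∈ J`: it exposes a face whose extreme points are the `x′_j`, `j ∈ J`. This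
face is proper, as otherwise `f` would be a kernel column.

Conversely, if `v` exposes a proper face then `K_{X + t v}` is eventually the face function, the
ray `t ↦ X + t v / N v` is a geodesic, and the face function grows linearly along `v` whereas
every `K_Y` is bounded above by `N Y`.
-/

open Filter Topology

noncomputable section

namespace PolyNorm

/-- The standard pairing `⟨x, y⟩ = ∑ k, x k * y k` on `ℝⁿ`. -/
def dot {n : ℕ} (x y : Fin n → ℝ) : ℝ := ∑ k, x k * y k

/-- `N` is a norm on `ℝⁿ`. -/
def IsNorm {n : ℕ} (N : (Fin n → ℝ) → ℝ) : Prop :=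
  (∀ x, (N x = 0 ↔ x = 0)) ∧ (∀ (a : ℝ) (x : Fin n → ℝ), N (a • x) = |a| * N x) ∧
    ∀ x y, N (x + y) ≤ N x + N y

/-- The Martin kernel column `K_X(x) = N(X) − N(X − x)` of the kernel
`(x,y) ↦ −N(y − x)` with basepoint `0`. -/
def polyK {n : ℕ} (N : (Fin n → ℝ) → ℝ) (X : Fin n → ℝ) : (Fin n → ℝ) → ℝ :=
  fun x => N X - N (X - x)

/-- The set `𝒦` of Martin kernel columns. -/
def polyKset {n : ℕ} (N : (Fin n → ℝ) → ℝ) : Set ((Fin n → ℝ) → ℝ) :=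
  Set.range (polyK N)

/-- The Martin space `ℳ`: the closure of `𝒦` in the product topology. -/
def polyMartin {n : ℕ} (N : (Fin n → ℝ) → ℝ) : Set ((Fin n → ℝ) → ℝ) :=
  closure (polyKset N)

/-- The dual unit ball `B′` of the norm `N`. -/
def dualBall {n : ℕ} (N : (Fin n → ℝ) → ℝ) : Set (Fin n → ℝ) :=
  {y | ∀ x, dot y x ≤ N x}

/-- `F` is a proper face of `B`: the intersection of `B` with a supporting half-space,
distinct from `B`. -/
def IsProperFace {n : ℕ} (B F : Set (Fin n → ℝ)) : Prop :=
  ∃ (v : Fin n → ℝ) (c : ℝ), (∀ y ∈ B, dot y v ≤ c) ∧ (∃ y ∈ B, dot y v = c) ∧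
    F = {y ∈ B | dot y v = c} ∧ F ≠ B

/-- A Rieffel almost-geodesic in the normed space `(ℝⁿ, N)`. -/
def IsRieffelAG {n : ℕ} (N : (Fin n → ℝ) → ℝ) (T : Set ℝ) (γ : ℝ → Fin n → ℝ) : Prop :=
  (0 : ℝ) ∈ T ∧ (∀ t ∈ T, 0 ≤ t) ∧ ¬ BddAbove T ∧
    ∀ ε : ℝ, 0 < ε → ∃ M : ℝ, ∀ s ∈ T, M ≤ s → ∀ t ∈ T, s ≤ t →
      |N (γ t - γ s) + N (γ s - γ 0) - t| < ε

/-- A Busemann point of `(ℝⁿ, N)`: a pointwise limit of `x ↦ N(γ(t)) − N(γ(t) − x)`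
along a Rieffel almost-geodesic `γ`. -/
def IsBusemannPt {n : ℕ} (N : (Fin n → ℝ) → ℝ) (w : (Fin n → ℝ) → ℝ) : Prop :=
  ∃ (T : Set ℝ) (γ : ℝ → Fin n → ℝ), IsRieffelAG N T γ ∧
    ∀ x, Tendsto (fun t : T => N (γ t) - N (γ t - x)) atTop (𝓝 (w x))

open Finset

section FiniteLattice

variable {ι G : Type*}

lemma neg_sup' [AddCommGroup G] [LinearOrder G] [IsOrderedAddMonoid G] (s : Finset ι)
    (hs : s.Nonempty) (f : ι → G) :
    -s.sup' hs f = s.inf' hs (fun i => -f i) := by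
  obtain ⟨i, hi, he⟩ := s.exists_mem_eq_sup' hs f
  refine le_antisymm (s.le_inf' hs _ fun j hj => neg_le_neg (s.le_sup' f hj)) ?_
  rw [he]
  exact s.inf'_le (fun i => -f i) hi

lemma inf'_add_const [AddGroup G] [LinearOrder G] [AddRightMono G] (s : Finset ι)
    (hs : s.Nonempty) (f : ι → G) (a : G) :
    s.inf' hs f + a = s.inf' hs (fun i => f i + a) :=
  map_finset_inf' (OrderIso.addRight a) hs f

lemma eventually_sup'_affine_eq [Fintype ι] [Nonempty ι] (α β : ι → ℝ) {J : Finset ι}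
    (hJ : J.Nonempty) {c : ℝ} (hβJ : ∀ j ∈ J, β j = c) (hβ : ∀ i ∉ J, β i < c) :
    ∀ᶠ t in atTop, univ.sup' univ_nonempty (fun i => α i + t * β i) = J.sup' hJ α + t * c := by
  have hlarge : ∀ i, ∀ᶠ t in atTop, i ∉ J → α i + t * β i ≤ J.sup' hJ α + t * c := by
    intro i
    by_cases hi : i ∈ J
    · exact Eventually.of_forall fun _ h => (h hi).elim
    · filter_upwards [eventually_ge_atTop ((α i - J.sup' hJ α) / (c - β i))] with t ht _
      rw [div_le_iff₀ (sub_pos.2 (hβ i hi))] at ht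
      linarith
  filter_upwards [eventually_all.2 hlarge] with t ht
  refine le_antisymm (univ.sup'_le _ _ fun i _ => ?_) ?_
  · by_cases hi : i ∈ J
    · rw [hβJ i hi]
      linarith [J.le_sup' α hi]
    · exact ht i hi
  · obtain ⟨j, hj, he⟩ := J.exists_mem_eq_sup' hJ α
    rw [he, ← hβJ j hj]
    exact univ.le_sup' (fun i => α i + t * β i) (mem_univ j)

lemma tendsto_univ_inf' [Fintype ι] [Nonempty ι] {α : Type*} {l : Filter α} {a : α → ι → ℝ}
    {J : Finset ι} (hJ : J.Nonempty) {b : ι → ℝ}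
    (hb : ∀ j ∈ J, Tendsto (fun t => a t j) l (𝓝 (b j)))
    (htop : ∀ i ∉ J, Tendsto (fun t => a t i) l atTop) :
    Tendsto (fun t => univ.inf' univ_nonempty (a t)) l (𝓝 (J.inf' hJ b)) := by
  have hJlim : Tendsto (fun t => J.inf' hJ (a t)) l (𝓝 (J.inf' hJ b)) :=
    Tendsto.finset_inf'_nhds_apply hJ hb
  have hlarge : ∀ i, ∀ᶠ t in l, i ∉ J → J.inf' hJ b + 1 ≤ a t i := by
    intro i
    by_cases hi : i ∈ J
    · exact Eventually.of_forall fun _ h => (h hi).elim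
    · filter_upwards [(htop i hi).eventually_ge_atTop (J.inf' hJ b + 1)] with t ht _ using ht
  refine hJlim.congr' ?_
  filter_upwards [eventually_all.2 hlarge, hJlim.eventually (eventually_le_nhds (lt_add_one _))]
    with t hbig hsmall
  refine le_antisymm (univ.le_inf' _ _ fun i _ => ?_) (inf'_mono _ (subset_univ J) hJ)
  by_cases hi : i ∈ J
  · exact J.inf'_le _ hi
  · exact hsmall.trans (hbig i hi)

end FiniteLattice

lemma exists_tendsto_or_tendsto_atTop {α : Type*} (𝒰 : Ultrafilter α) {f : α → ℝ}
    (hf : ∀ a, 0 ≤ f a) : (∃ b, Tendsto f 𝒰 (𝓝 b)) ∨ Tendsto f 𝒰 atTop := by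
  obtain ⟨L, -, hL⟩ := isCompact_univ.ultrafilter_le_nhds
    (𝒰.map fun a => ENNReal.ofReal (f a)) (by simp)
  rcases eq_or_ne L ⊤ with rfl | hL_top
  · exact Or.inr (ENNReal.tendsto_ofReal_nhds_top.1 hL)
  · refine Or.inl ⟨L.toReal, ?_⟩
    have := (ENNReal.tendsto_toReal hL_top).comp hL
    simpa [Function.comp_def, ENNReal.toReal_ofReal (hf _)] using this

lemma exists_ultrafilter_tendsto_of_mem_closure_range {α X : Type*} [TopologicalSpace X]
    {g : α → X} {x : X} (hx : x ∈ closure (Set.range g)) :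
    ∃ 𝒰 : Ultrafilter α, Tendsto g 𝒰 (𝓝 x) := by
  have : (comap g (𝓝 x)).NeBot :=
    comap_neBot_iff_frequently.2 (mem_closure_iff_frequently.1 hx)
  exact ⟨Ultrafilter.of (comap g (𝓝 x)), tendsto_comap.mono_left (Ultrafilter.of_le _)⟩

lemma _root_.LinearMap.exists_tendsto_of_tendsto {𝕜 E F α : Type*} [NontriviallyNormedField 𝕜]
    [CompleteSpace 𝕜] [NormedAddCommGroup E] [NormedSpace 𝕜 E] [FiniteDimensional 𝕜 E]
    [NormedAddCommGroup F] [NormedSpace 𝕜 F] (Λ : E →ₗ[𝕜] F) {l : Filter α} [l.NeBot]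
    {X : α → E} {g : F} (h : Tendsto (fun a => Λ (X a)) l (𝓝 g)) :
    ∃ (Y : α → E) (Y₀ : E), (∀ a, Λ (Y a) = Λ (X a)) ∧ Tendsto Y l (𝓝 Y₀) ∧ Λ Y₀ = g := by
  have hg : g ∈ LinearMap.range Λ := (LinearMap.range Λ).closed_of_finiteDimensional.mem_of_tendsto
    h (Eventually.of_forall fun a => LinearMap.mem_range_self Λ (X a))
  obtain ⟨ρ, hρ⟩ := Λ.rangeRestrict.exists_rightInverse_of_surjective Λ.range_rangeRestrict
  have hΛρ : ∀ y : LinearMap.range Λ, Λ (ρ y) = y := fun y =>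
    congrArg Subtype.val (LinearMap.congr_fun hρ y)
  refine ⟨fun a => ρ (Λ.rangeRestrict (X a)), ρ ⟨g, hg⟩, fun a => hΛρ _, ?_, hΛρ _⟩
  exact (ρ.continuous_of_finiteDimensional.tendsto _).comp (tendsto_subtype_rng.2 h)

section Norm

variable {n : ℕ} {N : (Fin n → ℝ) → ℝ}

lemma IsNorm.nonneg (hN : IsNorm N) (x : Fin n → ℝ) : 0 ≤ N x := by
  have h := hN.2.2 x ((-1 : ℝ) • x)
  rw [neg_one_smul, add_neg_cancel, (hN.1 0).2 rfl, ← neg_one_smul ℝ x, hN.2.1, abs_neg,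
    abs_one, one_mul] at h
  linarith

lemma IsNorm.pos (hN : IsNorm N) {x : Fin n → ℝ} (hx : x ≠ 0) : 0 < N x :=
  (hN.nonneg x).lt_of_ne fun h => hx ((hN.1 x).1 h.symm)

lemma polyK_le (hN : IsNorm N) (Y x : Fin n → ℝ) : polyK N Y x ≤ N Y :=
  sub_le_self _ (hN.nonneg _)

lemma isRieffelAG_ray (hN : IsNorm N) {u : Fin n → ℝ} (hu : N u = 1) (X : Fin n → ℝ) :
    IsRieffelAG N (Set.Ici 0) (fun t => X + t • u) := by
  refine ⟨Set.self_mem_Ici, fun t ht => ht, not_bddAbove_Ici 0,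
    fun ε hε => ⟨0, fun s hs _ t _ hst => ?_⟩⟩
  have hs' : (0 : ℝ) ≤ s := hs
  rw [show X + t • u - (X + s • u) = (t - s) • u by module,
    show X + s • u - (X + (0 : ℝ) • u) = s • u by module, hN.2.1, hN.2.1, hu,
    abs_of_nonneg (sub_nonneg.2 hst), abs_of_nonneg hs']
  simpa using hε

end Norm

lemma dot_eq_dotProduct {n : ℕ} (x y : Fin n → ℝ) : dot x y = x ⬝ᵥ y := rfl

section FaceFun

variable {n : ℕ} {I : Type*} {N : (Fin n → ℝ) → ℝ} {x' : I → Fin n → ℝ}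

def faceFun (x' : I → Fin n → ℝ) (J : Finset I) (hJ : J.Nonempty) (X : Fin n → ℝ) :
    (Fin n → ℝ) → ℝ :=
  fun x => J.inf' hJ (fun j => dot (x' j) (x - X)) + J.sup' hJ (fun j => dot (x' j) X)

lemma faceFun_apply_eq_sub {J : Finset I} (hJ : J.Nonempty) (X x : Fin n → ℝ) :
    faceFun x' J hJ X x =
      J.sup' hJ (fun j => dot (x' j) X) - J.sup' hJ (fun j => dot (x' j) (X - x)) := by
  rw [sub_eq_neg_add, neg_sup', faceFun]
  congr 2
  funext j
  rw [← neg_sub, dot_eq_dotProduct, dot_eq_dotProduct, dotProduct_neg]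

lemma faceFun_congr {J J' : Finset I} (hJ : J.Nonempty) (hJ' : J'.Nonempty)
    (h : x' '' J = x' '' J') : faceFun x' J hJ = faceFun x' J' hJ' := by
  classical
  have himage : J.image x' = J'.image x' := by rw [← coe_inj, coe_image, coe_image, h]
  have key : ∀ (K : Finset I) (hK : K.Nonempty) (X x : Fin n → ℝ), faceFun x' K hK X x =
      (K.image x').inf' (hK.image x') (fun y => dot y (x - X)) +
        (K.image x').sup' (hK.image x') (fun y => dot y X) := by
    intro K hK X x
    rw [inf'_image, sup'_image]
    rfl
  funext X x
  rw [key, key]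
  simp only [himage]

lemma faceFun_apply_eq_inf' {J : Finset I} (hJ : J.Nonempty) {X : Fin n → ℝ} {i₀ : I}
    {s : I → ℝ} (hi₀ : i₀ ∈ J) (hs : ∀ j ∈ J, 0 ≤ s j)
    (hX : ∀ j ∈ J, dot (x' j) X = dot (x' i₀) X - s j) (x : Fin n → ℝ) :
    faceFun x' J hJ X x = J.inf' hJ (fun j => s j + dot (x' j) x) := by
  have hsup : J.sup' hJ (fun j => dot (x' j) X) = dot (x' i₀) X :=
    le_antisymm (J.sup'_le _ _ fun j hj => by linarith [hX j hj, hs j hj])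
      (J.le_sup' (fun j => dot (x' j) X) hi₀)
  rw [faceFun, hsup, inf'_add_const]
  refine inf'_congr hJ rfl fun j hj => ?_
  rw [dot_eq_dotProduct, dotProduct_sub, ← dot_eq_dotProduct, ← dot_eq_dotProduct, hX j hj]
  ring

lemma faceFun_smul_apply {J : Finset I} (hJ : J.Nonempty) {v : Fin n → ℝ} {c : ℝ}
    (hv : ∀ j ∈ J, dot (x' j) v = c) (X : Fin n → ℝ) (s : ℝ) :
    faceFun x' J hJ X (s • v) = s * c := by
  have hshift : J.sup' hJ (fun j => dot (x' j) (X - s • v)) =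
      J.sup' hJ (fun j => dot (x' j) X + -(s * c)) := by
    refine sup'_congr hJ rfl fun j hj => ?_
    rw [← hv j hj]
    simp only [dot_eq_dotProduct, dotProduct_sub, dotProduct_smul, smul_eq_mul]
    ring
  rw [faceFun_apply_eq_sub, hshift, ← sup'_add]
  ring

lemma faceFun_notMem_polyKset (hN : IsNorm N) {J : Finset I} (hJ : J.Nonempty)
    {v : Fin n → ℝ} {c : ℝ} (hv : ∀ j ∈ J, dot (x' j) v = c) (hc : 0 < c) (X : Fin n → ℝ) :
    faceFun x' J hJ X ∉ polyKset N := by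
  rintro ⟨Y, hY⟩
  have h := polyK_le hN Y (((N Y + 1) / c) • v)
  rw [hY, faceFun_smul_apply hJ hv, div_mul_cancel₀ _ hc.ne'] at h
  linarith

end FaceFun

section Polyhedral

variable {n : ℕ} {I : Type*} [Fintype I] [Nonempty I] {N : (Fin n → ℝ) → ℝ}
  {x' : I → Fin n → ℝ}

lemma eq_sup'_of_eq_iSup (hrep : ∀ x, N x = ⨆ i, dot (x' i) x) (x : Fin n → ℝ) :
    N x = univ.sup' univ_nonempty (fun i => dot (x' i) x) := by
  rw [hrep x, sup'_univ_eq_ciSup]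

lemma mem_dualBall_of_eq_iSup (hrep : ∀ x, N x = ⨆ i, dot (x' i) x) (i : I) :
    x' i ∈ dualBall N := fun x => by
  rw [eq_sup'_of_eq_iSup hrep x]
  exact univ.le_sup' (fun i => dot (x' i) x) (mem_univ i)

lemma exists_dot_eq (hrep : ∀ x, N x = ⨆ i, dot (x' i) x) (X : Fin n → ℝ) :
    ∃ i, dot (x' i) X = N X := by
  obtain ⟨i, -, hi⟩ := univ.exists_mem_eq_sup' univ_nonempty (fun i => dot (x' i) X)
  exact ⟨i, by rw [eq_sup'_of_eq_iSup hrep, hi]⟩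

lemma polyK_eq_faceFun_univ (hrep : ∀ x, N x = ⨆ i, dot (x' i) x) (X : Fin n → ℝ) :
    polyK N X = faceFun x' univ univ_nonempty X := by
  funext x
  rw [faceFun_apply_eq_sub, polyK, eq_sup'_of_eq_iSup hrep, eq_sup'_of_eq_iSup hrep]

end Polyhedral

def Exposes {n : ℕ} {I : Type*} (x' : I → Fin n → ℝ) (J : Finset I) (v : Fin n → ℝ) (c : ℝ) :
    Prop :=
  (∀ j ∈ J, dot (x' j) v = c) ∧ ∀ i ∉ J, dot (x' i) v < c

namespace Exposes

variable {n : ℕ} {I : Type*} {N : (Fin n → ℝ) → ℝ} {x' : I → Fin n → ℝ} {J : Finset I}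
  {v : Fin n → ℝ} {c : ℝ}

lemma smul (he : Exposes x' J v c) {a : ℝ} (ha : 0 < a) : Exposes x' J (a • v) (a * c) := by
  simp only [Exposes, dot_eq_dotProduct, dotProduct_smul, smul_eq_mul] at he ⊢
  exact ⟨fun j hj => by rw [he.1 j hj], fun i hi => mul_lt_mul_of_pos_left (he.2 i hi) ha⟩

variable [Fintype I] [Nonempty I]

lemma norm_eq (hrep : ∀ x, N x = ⨆ i, dot (x' i) x) (he : Exposes x' J v c)
    (hJ : J.Nonempty) : N v = c := by
  obtain ⟨j, hj⟩ := hJ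
  rw [eq_sup'_of_eq_iSup hrep]
  refine le_antisymm (univ.sup'_le _ _ fun i _ => ?_) ?_
  · by_cases hi : i ∈ J
    · exact (he.1 i hi).le
    · exact (he.2 i hi).le
  · rw [← he.1 j hj]
    exact univ.le_sup' (fun i => dot (x' i) v) (mem_univ j)

lemma pos (hN : IsNorm N) (hrep : ∀ x, N x = ⨆ i, dot (x' i) x) (he : Exposes x' J v c)
    (hJ : J.Nonempty) (hJu : J ≠ univ) : 0 < c := by
  obtain ⟨i, -, hi⟩ := exists_of_ssubset (ssubset_univ_iff.2 hJu)
  rcases eq_or_ne v 0 with rfl | hv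
  · simpa [dot_eq_dotProduct] using he.2 i hi
  · exact he.norm_eq hrep hJ ▸ hN.pos hv

lemma eventually_norm_add_smul (hrep : ∀ x, N x = ⨆ i, dot (x' i) x) (he : Exposes x' J v c)
    (hJ : J.Nonempty) (z : Fin n → ℝ) :
    ∀ᶠ t in atTop, N (z + t • v) = J.sup' hJ (fun j => dot (x' j) z) + t * c := by
  simp only [eq_sup'_of_eq_iSup hrep, dot_eq_dotProduct, dotProduct_add, dotProduct_smul,
    smul_eq_mul]
  exact eventually_sup'_affine_eq _ _ hJ he.1 he.2

lemma tendsto_polyK (hrep : ∀ x, N x = ⨆ i, dot (x' i) x) (he : Exposes x' J v c)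
    (hJ : J.Nonempty) (X : Fin n → ℝ) :
    Tendsto (fun t : ℝ => polyK N (X + t • v)) atTop (𝓝 (faceFun x' J hJ X)) := by
  refine tendsto_pi_nhds.2 fun x => tendsto_const_nhds.congr' ?_
  filter_upwards [he.eventually_norm_add_smul hrep hJ X,
    he.eventually_norm_add_smul hrep hJ (X - x)] with t hX hXx
  rw [polyK, show X + t • v - x = X - x + t • v by abel, hX, hXx, faceFun_apply_eq_sub]
  ring

end Exposes

section Boundary

variable {n : ℕ} {I : Type*} [Fintype I] [Nonempty I] {N : (Fin n → ℝ) → ℝ}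
  {x' : I → Fin n → ℝ} {J : Finset I} {v : Fin n → ℝ} {c : ℝ}

lemma faceFun_mem_polyMartin (hrep : ∀ x, N x = ⨆ i, dot (x' i) x) (he : Exposes x' J v c)
    (hJ : J.Nonempty) (X : Fin n → ℝ) : faceFun x' J hJ X ∈ polyMartin N :=
  mem_closure_of_tendsto (he.tendsto_polyK hrep hJ X)
    (Eventually.of_forall fun _ => Set.mem_range_self _)

lemma isBusemannPt_faceFun (hN : IsNorm N) (hrep : ∀ x, N x = ⨆ i, dot (x' i) x)
    (he : Exposes x' J v c) (hJ : J.Nonempty) (hc : 0 < c) (X : Fin n → ℝ) :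
    IsBusemannPt N (faceFun x' J hJ X) := by
  have hu := he.smul (inv_pos.2 hc)
  rw [inv_mul_cancel₀ hc.ne'] at hu
  exact ⟨Set.Ici 0, fun t => X + t • c⁻¹ • v, isRieffelAG_ray hN (hu.norm_eq hrep hJ) X,
    fun x => tendsto_comp_val_Ici_atTop.2 (tendsto_pi_nhds.1 (hu.tendsto_polyK hrep hJ X) x)⟩

end Boundary

section Faces

variable {n : ℕ} {I : Type*} {N : (Fin n → ℝ) → ℝ} {x' : I → Fin n → ℝ}

lemma isExtreme_setOf_dot_eq {B : Set (Fin n → ℝ)} {v : Fin n → ℝ} {c : ℝ}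
    (hle : ∀ y ∈ B, dot y v ≤ c) : IsExtreme ℝ B {y ∈ B | dot y v = c} := by
  refine ⟨Set.sep_subset _ _, fun y₁ hy₁ y₂ hy₂ y hy ⟨a, b, ha, hb, hab, hy_eq⟩ => ⟨hy₁, ?_⟩⟩
  have hsum : a * dot y₁ v + b * dot y₂ v = c := by
    rw [← hy.2, ← hy_eq]
    simp only [dot_eq_dotProduct, add_dotProduct, smul_dotProduct, smul_eq_mul]
  have hc : a * c + b * c = c := by rw [← add_mul, hab, one_mul]
  refine (hle y₁ hy₁).antisymm (not_lt.1 fun hlt => ?_)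
  nlinarith [mul_pos ha (sub_pos.2 hlt), mul_nonneg hb.le (sub_nonneg.2 (hle y₂ hy₂))]

lemma extremePoints_setOf_dot_eq (hpoly : Set.range x' = (dualBall N).extremePoints ℝ)
    {v : Fin n → ℝ} {c : ℝ} (hle : ∀ y ∈ dualBall N, dot y v ≤ c) :
    {y ∈ dualBall N | dot y v = c}.extremePoints ℝ =
      {y ∈ dualBall N | dot y v = c} ∩ Set.range x' := by
  rw [(isExtreme_setOf_dot_eq hle).extremePoints_eq, hpoly]

variable [Fintype I] [Nonempty I]

lemma Exposes.image_eq (hrep : ∀ x, N x = ⨆ i, dot (x' i) x) {J : Finset I} {v : Fin n → ℝ}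
    {c : ℝ} (he : Exposes x' J v c) :
    x' '' J = {y ∈ dualBall N | dot y v = c} ∩ Set.range x' := by
  ext y
  constructor
  · rintro ⟨k, hk, rfl⟩
    exact ⟨⟨mem_dualBall_of_eq_iSup hrep k, he.1 k hk⟩, Set.mem_range_self k⟩
  · rintro ⟨⟨-, hy⟩, k, rfl⟩
    exact ⟨k, by_contra fun hk => (he.2 k hk).ne hy, rfl⟩

lemma isProperFace_of_exposes (hrep : ∀ x, N x = ⨆ i, dot (x' i) x)
    (hpoly : Set.range x' = (dualBall N).extremePoints ℝ) {J : Finset I} {v : Fin n → ℝ}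
    {c : ℝ} (he : Exposes x' J v c) (hJ : J.Nonempty) (hJu : J ≠ univ) :
    IsProperFace (dualBall N) {y ∈ dualBall N | dot y v = c} ∧
      x' '' J = {y ∈ dualBall N | dot y v = c}.extremePoints ℝ := by
  have hle : ∀ y ∈ dualBall N, dot y v ≤ c := fun y hy => he.norm_eq hrep hJ ▸ hy v
  have hB := mem_dualBall_of_eq_iSup hrep
  obtain ⟨i, -, hi⟩ := exists_of_ssubset (ssubset_univ_iff.2 hJu)
  obtain ⟨j, hj⟩ := hJ
  refine ⟨⟨v, c, hle, ⟨x' j, hB j, he.1 j hj⟩, rfl, fun h => ?_⟩, ?_⟩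
  · have hiF : x' i ∈ {y ∈ dualBall N | dot y v = c} := by
      rw [h]
      exact hB i
    exact (he.2 i hi).ne hiF.2
  · rw [extremePoints_setOf_dot_eq hpoly hle, he.image_eq hrep]

lemma exists_exposes_of_isProperFace (hN : IsNorm N) (hrep : ∀ x, N x = ⨆ i, dot (x' i) x)
    (hpoly : Set.range x' = (dualBall N).extremePoints ℝ) {F : Set (Fin n → ℝ)}
    (hF : IsProperFace (dualBall N) F) {J : Finset I} (hJ : J.Nonempty)
    (hext : x' '' J = F.extremePoints ℝ) :
    ∃ (J' : Finset I) (hJ' : J'.Nonempty) (v : Fin n → ℝ),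
      Exposes x' J' v (N v) ∧ 0 < N v ∧ faceFun x' J hJ = faceFun x' J' hJ' := by
  classical
  obtain ⟨v, c, hle, ⟨y, hyB, hyc⟩, rfl, hne⟩ := hF
  have hv : v ≠ 0 := by
    rintro rfl
    simp only [dot_eq_dotProduct, dotProduct_zero] at hyc
    subst hyc
    exact hne (Set.sep_eq_self_iff_mem_true.2 fun y _ => by simp [dot_eq_dotProduct])
  obtain rfl : c = N v := le_antisymm (hyc ▸ hyB v) <| by
    rw [eq_sup'_of_eq_iSup hrep]
    exact univ.sup'_le _ _ fun i _ => hle _ (mem_dualBall_of_eq_iSup hrep i)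
  set J' := univ.filter fun i => dot (x' i) v = N v
  have he : Exposes x' J' v (N v) := ⟨fun j hj => (mem_filter.1 hj).2, fun i hi =>
    (hle _ (mem_dualBall_of_eq_iSup hrep i)).lt_of_ne fun h => hi (mem_filter.2 ⟨mem_univ i, h⟩)⟩
  have himage : x' '' J' = x' '' J := by
    rw [hext, extremePoints_setOf_dot_eq hpoly hle, he.image_eq hrep]
  have hJ' : J'.Nonempty := by
    rw [← coe_nonempty, ← Set.image_nonempty, himage]
    exact (coe_nonempty.2 hJ).image x'
  exact ⟨J', hJ', v, he, hN.pos hv, faceFun_congr hJ hJ' himage.symm⟩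

end Faces

section Slacks

variable {n : ℕ} {I : Type*} [Fintype I] {N : (Fin n → ℝ) → ℝ} {x' : I → Fin n → ℝ}

lemma exists_exposes_of_tendsto_atTop {l : Filter (Fin n → ℝ)} [l.NeBot] {J : Finset I}
    {i₀ : I} {Y : (Fin n → ℝ) → Fin n → ℝ} {Y₀ : Fin n → ℝ} (hY : Tendsto Y l (𝓝 Y₀))
    (hYJ : ∀ X, ∀ j ∈ J, dot (x' j) (X - Y X) = dot (x' i₀) (X - Y X))
    (htop : ∀ i ∉ J, Tendsto (fun X => dot (x' i₀) X - dot (x' i) X) l atTop) :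
    ∃ v c, Exposes x' J v c := by
  have hdot : ∀ i, Tendsto (fun X => dot (x' i) (Y X)) l (𝓝 (dot (x' i) Y₀)) := fun i =>
    ((continuous_const.dotProduct continuous_id).tendsto Y₀).comp hY
  have hgap : ∀ i, ∀ᶠ X in l, i ∉ J → dot (x' i) (X - Y X) < dot (x' i₀) (X - Y X) := by
    intro i
    by_cases hi : i ∈ J
    · exact Eventually.of_forall fun _ h => (h hi).elim
    · filter_upwards [((htop i hi).atTop_add ((hdot i).sub (hdot i₀))).eventually_gt_atTop 0]
        with X hX _
      simp only [dot_eq_dotProduct, dotProduct_sub] at hX ⊢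
      linarith
  obtain ⟨X, hX⟩ := (eventually_all.2 hgap).exists
  exact ⟨X - Y X, dot (x' i₀) (X - Y X), hYJ X, hX⟩

lemma exists_base_and_exposes {l : Filter (Fin n → ℝ)} [l.NeBot] {J : Finset I} {s : I → ℝ}
    {i₀ : I} (hi₀ : i₀ ∈ J) (hs₀ : s i₀ = 0)
    (hs : ∀ j ∈ J, Tendsto (fun X => N X - dot (x' j) X) l (𝓝 (s j)))
    (htop : ∀ i ∉ J, Tendsto (fun X => N X - dot (x' i) X) l atTop) :
    ∃ X₀, (∀ j ∈ J, dot (x' j) X₀ = dot (x' i₀) X₀ - s j) ∧ ∃ v c, Exposes x' J v c := by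
  let Λ : (Fin n → ℝ) →ₗ[ℝ] (J → ℝ) := Matrix.mulVecLin fun j : J => x' j - x' i₀
  have hΛ : ∀ X (j : J), Λ X j = dot (x' j) X - dot (x' i₀) X := fun X j =>
    sub_dotProduct (x' j) (x' i₀) X
  have hlim : Tendsto (fun X => Λ X) l (𝓝 fun j => -s j) := tendsto_pi_nhds.2 fun j => by
    simp only [hΛ]
    have := (hs i₀ hi₀).sub (hs j j.2)
    rw [hs₀, zero_sub] at this
    exact this.congr fun X => by ring
  obtain ⟨Y, X₀, hYΛ, hY, hX₀⟩ := Λ.exists_tendsto_of_tendsto (X := id) hlim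
  refine ⟨X₀, fun j hj => ?_,
    exists_exposes_of_tendsto_atTop (i₀ := i₀) hY (fun X j hj => ?_) fun i hi => ?_⟩
  · have := congrFun hX₀ ⟨j, hj⟩
    rw [hΛ] at this
    linarith
  · have := congrFun (hYΛ X) ⟨j, hj⟩
    simp only [hΛ, id, dot_eq_dotProduct, dotProduct_sub] at this ⊢
    linarith
  · exact ((htop i hi).atTop_add (hs i₀ hi₀).neg).congr fun X => by ring

variable [Nonempty I]

lemma polyK_eq_inf' (hrep : ∀ x, N x = ⨆ i, dot (x' i) x) (X x : Fin n → ℝ) :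
    polyK N X x = univ.inf' univ_nonempty (fun i => (N X - dot (x' i) X) + dot (x' i) x) := by
  rw [polyK_eq_faceFun_univ hrep, faceFun, ← eq_sup'_of_eq_iSup hrep, inf'_add_const]
  refine inf'_congr _ rfl fun i _ => ?_
  simp only [dot_eq_dotProduct, dotProduct_sub]
  ring

lemma exists_limit_slacks (hrep : ∀ x, N x = ⨆ i, dot (x' i) x)
    (𝒰 : Ultrafilter (Fin n → ℝ)) :
    ∃ (J : Finset I) (s : I → ℝ) (i₀ : I), i₀ ∈ J ∧ s i₀ = 0 ∧ (∀ j ∈ J, 0 ≤ s j) ∧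
      (∀ j ∈ J, Tendsto (fun X => N X - dot (x' j) X) 𝒰 (𝓝 (s j))) ∧
      ∀ i ∉ J, Tendsto (fun X => N X - dot (x' i) X) 𝒰 atTop := by
  classical
  have hnonneg : ∀ X i, 0 ≤ N X - dot (x' i) X := fun X i =>
    sub_nonneg.2 (mem_dualBall_of_eq_iSup hrep i X)
  set J := univ.filter fun i => ∃ b, Tendsto (fun X => N X - dot (x' i) X) 𝒰 (𝓝 b)
  choose! s hs using fun j (hj : j ∈ J) => (mem_filter.1 hj).2
  have htop : ∀ i ∉ J, Tendsto (fun X => N X - dot (x' i) X) 𝒰 atTop := fun i hi =>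
    (exists_tendsto_or_tendsto_atTop 𝒰 (hnonneg · i)).resolve_left fun h =>
      hi (mem_filter.2 ⟨mem_univ i, h⟩)
  obtain ⟨i₀, hi₀⟩ : ∃ i₀, ∀ᶠ X in 𝒰, N X - dot (x' i₀) X = 0 :=
    Ultrafilter.eventually_exists_iff.1 <| Eventually.of_forall fun X =>
      (exists_dot_eq hrep X).imp fun i hi => by rw [hi, sub_self]
  have hzero : Tendsto (fun X => N X - dot (x' i₀) X) 𝒰 (𝓝 0) :=
    tendsto_const_nhds.congr' (hi₀.mono fun X h => h.symm)
  have hi₀J : i₀ ∈ J := mem_filter.2 ⟨mem_univ _, 0, hzero⟩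
  exact ⟨J, s, i₀, hi₀J, tendsto_nhds_unique (hs i₀ hi₀J) hzero,
    fun j hj => ge_of_tendsto' (hs j hj) (hnonneg · j), hs, htop⟩

lemma eq_inf'_of_tendsto_polyK (hrep : ∀ x, N x = ⨆ i, dot (x' i) x)
    {l : Filter (Fin n → ℝ)} [l.NeBot] {f : (Fin n → ℝ) → ℝ} (hf : Tendsto (polyK N) l (𝓝 f))
    {J : Finset I} (hJ : J.Nonempty) {s : I → ℝ}
    (hs : ∀ j ∈ J, Tendsto (fun X => N X - dot (x' j) X) l (𝓝 (s j)))
    (htop : ∀ i ∉ J, Tendsto (fun X => N X - dot (x' i) X) l atTop) (x : Fin n → ℝ) :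
    f x = J.inf' hJ (fun j => s j + dot (x' j) x) := by
  refine tendsto_nhds_unique (tendsto_pi_nhds.1 hf x) ?_
  simp only [polyK_eq_inf' hrep]
  exact tendsto_univ_inf' hJ (fun j hj => (hs j hj).add_const _)
    fun i hi => tendsto_atTop_add_const_right _ _ (htop i hi)

lemma exists_exposes_of_mem_boundary (hrep : ∀ x, N x = ⨆ i, dot (x' i) x)
    {f : (Fin n → ℝ) → ℝ} (hf : f ∈ polyMartin N) (hfK : f ∉ polyKset N) :
    ∃ (J : Finset I) (hJ : J.Nonempty) (X v : Fin n → ℝ) (c : ℝ),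
      Exposes x' J v c ∧ J ≠ univ ∧ f = faceFun x' J hJ X := by
  -- pointwise convergence is not first countable: ultrafilters replace sequences
  obtain ⟨𝒰, h𝒰⟩ := exists_ultrafilter_tendsto_of_mem_closure_range hf
  obtain ⟨J, s, i₀, hi₀, hs₀, hs_nonneg, hs, htop⟩ := exists_limit_slacks hrep 𝒰
  have hJ : J.Nonempty := ⟨i₀, hi₀⟩
  obtain ⟨X, hX, v, c, he⟩ := exists_base_and_exposes hi₀ hs₀ hs htop
  have hf_eq : f = faceFun x' J hJ X := funext fun x => by
    rw [eq_inf'_of_tendsto_polyK hrep h𝒰 hJ hs htop x,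
      faceFun_apply_eq_inf' hJ hi₀ hs_nonneg hX x]
  refine ⟨J, hJ, X, v, c, he, ?_, hf_eq⟩
  rintro rfl
  exact hfK ⟨X, by rw [hf_eq, polyK_eq_faceFun_univ hrep]⟩

end Slacks

theorem polyhedral_martin_boundary_general {n : ℕ}
    {I : Type*} [Fintype I] [Nonempty I]
    (N : (Fin n → ℝ) → ℝ) (hN : IsNorm N) (x' : I → Fin n → ℝ)
    (hrep : ∀ x, N x = ⨆ i, dot (x' i) x)
    (hpoly : Set.range x' = (dualBall N).extremePoints ℝ) :
    (polyMartin N \ polyKset N =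
      {f | ∃ (X : Fin n → ℝ) (J : Finset I) (hJ : J.Nonempty)
          (F : Set (Fin n → ℝ)),
        IsProperFace (dualBall N) F ∧ x' '' ↑J = F.extremePoints ℝ ∧
        f = fun x => J.inf' hJ (fun j => dot (x' j) (x - X)) +
          J.sup' hJ (fun j => dot (x' j) X)}) ∧
    ∀ f ∈ polyMartin N \ polyKset N, IsBusemannPt N f := by
  refine ⟨Set.ext fun f => ⟨fun hf => ?_, ?_⟩, fun f hf => ?_⟩
  · obtain ⟨J, hJ, X, v, c, he, hJu, rfl⟩ := exists_exposes_of_mem_boundary hrep hf.1 hf.2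
    obtain ⟨hface, hext⟩ := isProperFace_of_exposes hrep hpoly he hJ hJu
    exact ⟨X, J, hJ, _, hface, hext, rfl⟩
  · rintro ⟨X, J, hJ, F, hF, hext, rfl⟩
    obtain ⟨J', hJ', v, he, hv, hJJ'⟩ := exists_exposes_of_isProperFace hN hrep hpoly hF hJ hext
    change faceFun x' J hJ X ∈ _
    rw [hJJ']
    exact ⟨faceFun_mem_polyMartin hrep he hJ' X, faceFun_notMem_polyKset hN hJ' he.1 hv X⟩
  · obtain ⟨J, hJ, X, v, c, he, hJu, rfl⟩ := exists_exposes_of_mem_boundary hrep hf.1 hf.2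
    exact isBusemannPt_faceFun hN hrep he hJ (he.pos hN hrep hJ hJu) X

/-- for a polyhedral norm `N = max_i ⟨x′_i, ·⟩`, whose dual ball `B′` has
finite extreme point set `{x′_i}_{i ∈ I}`, the Martin boundary `ℳ ∖ 𝒦` of the kernel
`(x,y) ↦ −N(y−x)` with basepoint `0` consists exactly of the functions
`x ↦ min_{j∈J} ⟨x′_j, x − X⟩ + max_{j∈J} ⟨x′_j, X⟩` where `X ∈ ℝⁿ` and `{x′_j}_{j∈J}` is
the extreme point set of a proper face of `B′`; moreover every boundary point is a
Busemann point of `(ℝⁿ, N)`. -/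
theorem polyhedral_martin_boundary {n : ℕ} (hn : 1 ≤ n)
    {I : Type*} [Fintype I] [Nonempty I]
    (N : (Fin n → ℝ) → ℝ) (hN : IsNorm N) (x' : I → Fin n → ℝ)
    (hrep : ∀ x, N x = ⨆ i, dot (x' i) x)
    (hpoly : Set.range x' = (dualBall N).extremePoints ℝ) :
    (polyMartin N \ polyKset N =
      {f | ∃ (X : Fin n → ℝ) (J : Finset I) (hJ : J.Nonempty)
          (F : Set (Fin n → ℝ)),
        IsProperFace (dualBall N) F ∧ x' '' ↑J = F.extremePoints ℝ ∧
        f = fun x => J.inf' hJ (fun j => dot (x' j) (x - X)) +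
          J.sup' hJ (fun j => dot (x' j) X)}) ∧
    ∀ f ∈ polyMartin N \ polyKset N, IsBusemannPt N f :=
  polyhedral_martin_boundary_general N hN x' hrep hpoly

end PolyNorm
end
end
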